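/- arXiv:2111.01927 — 7 statements merged into one kernel-verified Lean document; each statement's English description precedes it below -/
import Mathlib

section
/- The family A[0,1] of attractors of iterated function systems acting on [0,1] is not σ-strongly porous as a subset of the hyperspace K([0,1]) of nonempty compact subsets of [0,1] with the Hausdorff metric. -/
open Metric Set Filter Topology TopologicalSpace

/-- A contraction on a metric space: a Lipschitz map with some constant `L < 1`. -/
def IsContraction {X : Type*} [MetricSpace X] (f : X → X) : Prop :=
  ∃ L : ℝ, 0 ≤ L ∧ L < 1 ∧ ∀ x y, dist (f x) (f y) ≤ L * dist x y

/-- `A` is an attractor of an iterated function system: it is the union of its images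
under finitely many contractions. -/
def IsIFSAttractor {X : Type*} [MetricSpace X] (A : Set X) : Prop :=
  ∃ (n : ℕ) (f : Fin (n + 1) → X → X),
    (∀ i, IsContraction (f i)) ∧ A = ⋃ i, f i '' A

/-- A subset `A` of a metric space is strongly porous if for every point `x` there are
points `c n → x` and radii `r n > 0` with `r n / dist x (c n) → 1` such that the closed
ball `B(c n, r n)` is disjoint from `A`. -/
def StronglyPorous {X : Type*} [MetricSpace X] (A : Set X) : Prop :=
  ∀ x : X, ∃ (c : ℕ → X) (r : ℕ → ℝ),
    (∀ n, 0 < r n) ∧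
    Tendsto c atTop (𝓝 x) ∧
    Tendsto (fun n => r n / dist x (c n)) atTop (𝓝 1) ∧
    ∀ n, closedBall (c n) (r n) ∩ A = ∅

/-- A set is σ-strongly porous if it is a countable union of strongly porous sets. -/
def SigmaStronglyPorous {X : Type*} [MetricSpace X] (A : Set X) : Prop :=
  ∃ S : ℕ → Set X, (∀ n, StronglyPorous (S n)) ∧ A = ⋃ n, S n

noncomputable section


namespace AuxAttr

def wSet (C : Set ℝ) (d p : ℝ) : Set ℝ := C ∩ Set.Icc (p - (11/10)*d) (p + (11/10)*d)

def bU (C : Set ℝ) (d p : ℝ) : ℝ := sInf (wSet C d p)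
def bV (C : Set ℝ) (d p : ℝ) : ℝ := sSup (wSet C d p)
def bA (C : Set ℝ) (d p : ℝ) : ℝ := bU C d p + (bV C d p - bU C d p)/4
def bB (C : Set ℝ) (d p : ℝ) : ℝ := bV C d p - (bV C d p - bU C d p)/4

def build (C : Set ℝ) (d p : ℝ) : Bool → ℝ
  | false => bA C d p
  | true =>
    if d/50 ≤ bV C d p - bU C d p then bB C d p
    else if bA C d p + d/100 ≤ 1 then bA C d p + d/100 else bA C d p - d/100

theorem build_props (C : Set ℝ) (hC : IsCompact C) (hC01 : C ⊆ Set.Icc 0 1)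
    (d p : ℝ) (hd : 0 < d) (hd1 : d ≤ 1/100)
    (hW : (wSet C d p).Nonempty) :
    (∀ b, build C d p b ∈ Set.Icc (0:ℝ) 1) ∧
    (∀ b, |build C d p b - p| ≤ 2*d) ∧
    (d/100 ≤ |build C d p false - build C d p true|) ∧
    (∀ b, ∃ q ∈ C, |build C d p b - q| ≤ (6/10)*d) ∧
    (∀ q ∈ wSet C d p, ∃ b, |build C d p b - q| ≤ (6/10)*d) := by
  have hWc : IsCompact (wSet C d p) := hC.inter_right isClosed_Icc
  have hu : bU C d p ∈ wSet C d p := hWc.sInf_mem hW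
  have hv : bV C d p ∈ wSet C d p := hWc.sSup_mem hW
  have hbdd : BddBelow (wSet C d p) := hWc.bddBelow
  have hbdd' : BddAbove (wSet C d p) := hWc.bddAbove
  have hmem : ∀ q ∈ wSet C d p, bU C d p ≤ q ∧ q ≤ bV C d p := fun q hq =>
    ⟨csInf_le hbdd hq, le_csSup hbdd' hq⟩
  have huv : bU C d p ≤ bV C d p := (hmem _ hu).2
  have hu01 : bU C d p ∈ Set.Icc (0:ℝ) 1 := hC01 hu.1
  have hv01 : bV C d p ∈ Set.Icc (0:ℝ) 1 := hC01 hv.1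
  have huw : p - (11/10)*d ≤ bU C d p := hu.2.1
  have hvw : bV C d p ≤ p + (11/10)*d := hv.2.2
  have hvu : bV C d p - bU C d p ≤ (22/10)*d := by linarith
  obtain ⟨hu0, hu1⟩ := hu01
  obtain ⟨hv0, hv1⟩ := hv01
  set u := bU C d p
  set v := bV C d p
  have hAuv : bA C d p = u + (v-u)/4 := rfl
  have hBuv : bB C d p = v - (v-u)/4 := rfl
  -- value of build at true in each case
  refine ⟨?_, ?_, ?_, ?_, ?_⟩
  · intro b
    cases b
    · simp only [build, hAuv]; constructor <;> [linarith; linarith]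
    · simp only [build]
      split_ifs with h1 h2
      · rw [hBuv]; constructor <;> [linarith; linarith]
      · rw [hAuv] at h2 ⊢; constructor <;> [linarith; linarith]
      · rw [hAuv] at h2 ⊢
        constructor
        · linarith
        · linarith
  · intro b
    cases b
    · simp only [build, hAuv]; rw [abs_le]; constructor <;> linarith
    · simp only [build]
      split_ifs with h1 h2
      · rw [hBuv, abs_le]; constructor <;> linarith
      · rw [hAuv, abs_le]; constructor <;> linarith
      · rw [hAuv, abs_le]; constructor <;> linarith
  · simp only [build]
    split_ifs with h1 h2
    · have h1' : d/50 ≤ v - u := h1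
      rw [hAuv, hBuv]
      have heq : u + (v-u)/4 - (v - (v-u)/4) = -((v-u)/2) := by ring
      rw [heq, abs_neg, abs_of_nonneg (by linarith)]
      linarith
    · rw [hAuv]
      rw [abs_sub_comm, add_sub_cancel_left, abs_of_nonneg (by linarith)]
    · rw [hAuv, abs_sub_comm]
      have : u + (v-u)/4 - d/100 - (u + (v-u)/4) = -(d/100) := by ring
      rw [this, abs_neg, abs_of_nonneg (by linarith)]
  · intro b
    cases b
    · exact ⟨u, hu.1, by simp only [build]; rw [hAuv, abs_le]; constructor <;> linarith⟩
    · simp only [build]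
      split_ifs with h1 h2
      · exact ⟨v, hv.1, by rw [hBuv, abs_le]; constructor <;> linarith⟩
      · exact ⟨u, hu.1, by rw [hAuv, abs_le]; constructor <;> linarith⟩
      · exact ⟨u, hu.1, by rw [hAuv, abs_le]; constructor <;> linarith⟩
  · intro q hq
    obtain ⟨hqu, hqv⟩ := hmem q hq
    by_cases h1 : d/50 ≤ v - u
    · by_cases h2 : q ≤ (u+v)/2
      · exact ⟨false, by simp only [build]; rw [hAuv, abs_le]; constructor <;> linarith⟩
      · refine ⟨true, ?_⟩
        have h1' : d/50 ≤ bV C d p - bU C d p := h1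
        simp only [build, if_pos h1']
        rw [hBuv, abs_le]; constructor <;> linarith
    · have hvu' : v - u < d/50 := not_le.mp h1
      exact ⟨false, by simp only [build]; rw [hAuv, abs_le]; constructor <;> linarith⟩


abbrev XX := NonemptyCompacts (Set.Icc (0 : ℝ) 1)

structure SD where
  x : (ℕ → Bool) → ℝ
  e : ℝ
  c : XX
  r : ℝ

def Good (n : ℕ) (p : SD) : Prop :=
  (∀ ω ω' : ℕ → Bool, (∀ i < n, ω i = ω' i) → p.x ω = p.x ω') ∧
  (∀ ω, p.x ω ∈ Set.Icc (0:ℝ) 1) ∧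
  (∀ ω ω' : ℕ → Bool, (∃ i, i < n ∧ ω i ≠ ω' i) → p.e/200 ≤ |p.x ω - p.x ω'|) ∧
  0 < p.e ∧ p.e ≤ 1/100

def Link (S : Set XX) (n : ℕ) (p q : SD) : Prop :=
  Good (n+1) q ∧ q.e ≤ p.e/1000000 ∧ (∀ ω, |q.x ω - p.x ω| ≤ 2*q.e) ∧
  0 < q.r ∧ Metric.closedBall q.c q.r ∩ S = ∅ ∧ (9/10)*q.e ≤ q.r ∧
  (∀ t : Set.Icc (0:ℝ) 1, t ∈ (q.c : Set (Set.Icc (0:ℝ) 1)) → ∃ ω, |q.x ω - (t:ℝ)| ≤ (7/10)*q.e) ∧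
  (∀ ω, ∃ t : Set.Icc (0:ℝ) 1, t ∈ (q.c : Set (Set.Icc (0:ℝ) 1)) ∧ |q.x ω - (t:ℝ)| ≤ (7/10)*q.e)

theorem cont_of_cyl (g : (ℕ → Bool) → ℝ) (n : ℕ)
    (h : ∀ ω ω' : ℕ → Bool, (∀ i < n, ω i = ω' i) → g ω = g ω') : Continuous g := by
  rw [continuous_iff_continuousAt]
  intro ω
  have hopen : IsOpen {ω' : ℕ → Bool | ∀ i < n, ω' i = ω i} := by
    have heq : {ω' : ℕ → Bool | ∀ i < n, ω' i = ω i}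
        = ⋂ i ∈ Finset.range n, (fun ω' : ℕ → Bool => ω' i) ⁻¹' {ω i} := by
      ext ω'; simp [Finset.mem_range]
    rw [heq]
    exact isOpen_biInter_finset fun i _ =>
      (continuous_apply i).isOpen_preimage _ (isOpen_discrete _)
  have hmem : {ω' : ℕ → Bool | ∀ i < n, ω' i = ω i} ∈ 𝓝 ω :=
    hopen.mem_nhds (by simp)
  have heqv : g =ᶠ[𝓝 ω] fun _ => g ω := by
    filter_upwards [hmem] with ω' hω'
    exact h ω' ω hω'
  exact heqv.continuousAt

theorem step (S : Set XX) (hS : StronglyPorous S) (n : ℕ) (p : SD) (hp : Good n p) :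
    ∃ q : SD, Link S n p q := by
  obtain ⟨hG1, hG2, hG3, hG4, hG5⟩ := hp
  have hcont : Continuous (fun ω => (⟨p.x ω, hG2 ω⟩ : Set.Icc (0:ℝ) 1)) :=
    (cont_of_cyl p.x n hG1).subtype_mk _
  set Y : XX := ⟨⟨Set.range (fun ω => (⟨p.x ω, hG2 ω⟩ : Set.Icc (0:ℝ) 1)),
    isCompact_range hcont⟩, Set.range_nonempty _⟩ with hY
  obtain ⟨cs, rs, hrpos, hctend, hratio, hdisj⟩ := hS Y
  have h1 : ∀ᶠ k in atTop, dist (cs k) Y < p.e/2000000 :=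
    Metric.tendsto_nhds.mp hctend _ (by positivity)
  have h2 : ∀ᶠ k in atTop, (9:ℝ)/10 < rs k / dist Y (cs k) :=
    hratio.eventually (eventually_gt_nhds (by norm_num))
  obtain ⟨k, hk1, hk2⟩ := (h1.and h2).exists
  set d := dist Y (cs k) with hdd
  have hd0 : 0 < d := by
    by_contra h
    push_neg at h
    have h0 : d = 0 := le_antisymm h dist_nonneg
    rw [h0, div_zero] at hk2; norm_num at hk2
  have hk1' : d < p.e/2000000 := by rw [hdd, dist_comm]; exact hk1
  have hrk : (9/10)*d < rs k := (lt_div_iff₀ hd0).mp hk2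
  have hd1 : d ≤ 1/100 := by linarith
  have hde : d ≤ p.e/1000000 := by linarith
  -- set level facts
  have hfin : EMetric.hausdorffEdist (Y : Set (Set.Icc (0:ℝ) 1)) ((cs k : Set (Set.Icc (0:ℝ) 1))) ≠ ⊤ :=
    Metric.hausdorffEdist_ne_top_of_nonempty_of_bounded Y.nonempty (cs k).nonempty
      Y.isCompact.isBounded (cs k).isCompact.isBounded
  have hHD : hausdorffDist (Y : Set (Set.Icc (0:ℝ) 1)) ((cs k : Set (Set.Icc (0:ℝ) 1))) = d :=
    (Metric.NonemptyCompacts.dist_eq).symm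
  have hF2 : ∀ ω : ℕ → Bool, ∃ t ∈ (cs k : Set (Set.Icc (0:ℝ) 1)), |p.x ω - (t:ℝ)| < (101/100)*d := by
    intro ω
    have hmem : (⟨p.x ω, hG2 ω⟩ : Set.Icc (0:ℝ) 1) ∈ (Y : Set (Set.Icc (0:ℝ) 1)) := ⟨ω, rfl⟩
    have hlt : hausdorffDist (Y : Set (Set.Icc (0:ℝ) 1)) ((cs k : Set (Set.Icc (0:ℝ) 1))) < (101/100)*d := by
      rw [hHD]; linarith
    obtain ⟨t, ht, hdt⟩ := exists_dist_lt_of_hausdorffDist_lt hmem hlt hfin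
    refine ⟨t, ht, ?_⟩
    rw [Subtype.dist_eq] at hdt
    simpa [Real.dist_eq] using hdt
  have hF1 : ∀ t ∈ (cs k : Set (Set.Icc (0:ℝ) 1)), ∃ ω, |p.x ω - (t:ℝ)| < (101/100)*d := by
    intro t ht
    have hlt : hausdorffDist ((cs k : Set (Set.Icc (0:ℝ) 1))) (Y : Set (Set.Icc (0:ℝ) 1)) < (101/100)*d := by
      rw [hausdorffDist_comm, hHD]; linarith
    obtain ⟨y, hy, hdt⟩ := exists_dist_lt_of_hausdorffDist_lt ht hlt (Metric.hausdorffEdist_ne_top_of_nonempty_of_bounded (cs k).nonempty Y.nonempty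
      (cs k).isCompact.isBounded Y.isCompact.isBounded)
    obtain ⟨ω, rfl⟩ := hy
    refine ⟨ω, ?_⟩
    rw [Subtype.dist_eq] at hdt
    rw [abs_sub_comm]
    simpa [Real.dist_eq] using hdt
  -- real level compact set
  set CR : Set ℝ := Subtype.val '' (cs k : Set (Set.Icc (0:ℝ) 1)) with hCR
  have hCRc : IsCompact CR := ((cs k).isCompact).image continuous_subtype_val
  have hCR01 : CR ⊆ Set.Icc 0 1 := by
    rintro - ⟨t, ht, rfl⟩; exact t.2
  have hWne : ∀ ω : ℕ → Bool, (wSet CR d (p.x ω)).Nonempty := by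
    intro ω
    obtain ⟨t, ht, habs⟩ := hF2 ω
    refine ⟨(t:ℝ), ⟨t, ht, rfl⟩, ?_⟩
    rw [Set.mem_Icc]
    rw [abs_lt] at habs
    constructor <;> linarith [habs.1, habs.2]
  have props := fun ω : ℕ → Bool =>
    build_props CR hCRc hCR01 d (p.x ω) hd0 hd1 (hWne ω)
  have habs3 : ∀ a b c : ℝ, |a + b + c| ≤ |a| + |b| + |c| := by
    intro a b c
    calc |a + b + c| ≤ |a + b| + |c| := abs_add_le _ _
      _ ≤ |a| + |b| + |c| := by gcongr; exact abs_add_le _ _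
  refine ⟨⟨fun ω => build CR d (p.x ω) (ω n), d, cs k, rs k⟩, ?_, hde, ?_, hrpos k, hdisj k, le_of_lt hrk, ?_, ?_⟩
  · -- Good (n+1)
    refine ⟨?_, ?_, ?_, hd0, hd1⟩
    · intro ω ω' hag
      have hx : p.x ω = p.x ω' := hG1 ω ω' fun i hi => hag i (Nat.lt_succ_of_lt hi)
      have hb : ω n = ω' n := hag n (Nat.lt_succ_self n)
      dsimp only
      rw [hx, hb]
    · intro ω
      exact (props ω).1 (ω n)
    · intro ω ω' hex
      obtain ⟨i, hi, hne⟩ := hex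
      dsimp only
      by_cases hc : ∃ j, j < n ∧ ω j ≠ ω' j
      · have hold : p.e/200 ≤ |p.x ω - p.x ω'| := hG3 ω ω' hc
        have hA : |build CR d (p.x ω) (ω n) - p.x ω| ≤ 2*d := (props ω).2.1 (ω n)
        have hB : |build CR d (p.x ω') (ω' n) - p.x ω'| ≤ 2*d := (props ω').2.1 (ω' n)
        have key : p.x ω - p.x ω'
            = (build CR d (p.x ω) (ω n) - build CR d (p.x ω') (ω' n))
              + (p.x ω - build CR d (p.x ω) (ω n))
              + (build CR d (p.x ω') (ω' n) - p.x ω') := by ring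
        have htri : |p.x ω - p.x ω'|
            ≤ |build CR d (p.x ω) (ω n) - build CR d (p.x ω') (ω' n)| + 2*d + 2*d := by
          rw [key]
          refine (habs3 _ _ _).trans ?_
          have h1' : |p.x ω - build CR d (p.x ω) (ω n)| ≤ 2*d := by
            rw [abs_sub_comm]; exact hA
          linarith
        have hee : p.e ≥ 1000000*d := by linarith
        linarith
      · push_neg at hc
        have hx : p.x ω = p.x ω' := hG1 ω ω' hc
        have hb : ω n ≠ ω' n := by
          rcases Nat.lt_succ_iff_lt_or_eq.mp hi with h | h
          · exact absurd hne (by simpa using hc i h)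
          · subst h; exact hne
        have hsep := (props ω).2.2.1
        have hgoal : d/100 ≤ |build CR d (p.x ω) (ω n) - build CR d (p.x ω') (ω' n)| := by
          rw [← hx]
          cases hb1 : ω n <;> cases hb2 : ω' n
          · exact absurd (hb1.trans hb2.symm) hb
          · exact hsep
          · rw [abs_sub_comm]; exact hsep
          · exact absurd (hb1.trans hb2.symm) hb
        linarith
  · intro ω
    exact (props ω).2.1 (ω n)
  · -- cover : every point of c is near some new point
    intro t ht
    dsimp only at ht ⊢
    obtain ⟨ω₀, hω₀⟩ := hF1 t ht
    have htW : (t:ℝ) ∈ wSet CR d (p.x ω₀) := by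
      refine ⟨⟨t, ht, rfl⟩, ?_⟩
      rw [Set.mem_Icc]
      rw [abs_lt] at hω₀
      constructor <;> linarith [hω₀.1, hω₀.2]
    obtain ⟨b, hbb⟩ := (props ω₀).2.2.2.2 (t:ℝ) htW
    refine ⟨Function.update ω₀ n b, ?_⟩
    have hxu : p.x (Function.update ω₀ n b) = p.x ω₀ :=
      hG1 _ _ fun i hi => Function.update_of_ne (Nat.ne_of_lt hi) _ _
    have hnu : (Function.update ω₀ n b) n = b := Function.update_self n b ω₀
    rw [hxu, hnu]
    linarith [hbb]
  · -- each new point is near c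
    intro ω
    dsimp only
    obtain ⟨qq, hqq, hq2⟩ := (props ω).2.2.2.1 (ω n)
    obtain ⟨t, ht, rfl⟩ := hqq
    exact ⟨t, ht, by linarith⟩


def base : SD := ⟨fun _ => 1/2, 1/100,
  ⟨⟨{⟨1/2, by norm_num⟩}, isCompact_singleton⟩, Set.singleton_nonempty _⟩, 1⟩

theorem good_base : Good 0 base := by
  refine ⟨fun ω ω' _ => rfl, fun ω => by norm_num [base], fun ω ω' h => ?_,
    by norm_num [base], by norm_num [base]⟩
  obtain ⟨i, hi, _⟩ := h; omega

open Classical in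
def next (S : ℕ → Set XX) (hS : ∀ n, StronglyPorous (S n)) (n : ℕ) (p : SD) : SD :=
  if h : Good n p then Classical.choose (step (S n) (hS n) n p h) else base

def chain (S : ℕ → Set XX) (hS : ∀ n, StronglyPorous (S n)) : ℕ → SD
  | 0 => base
  | (n+1) => next S hS n (chain S hS n)

theorem good_chain (S : ℕ → Set XX) (hS : ∀ n, StronglyPorous (S n)) :
    ∀ n, Good n (chain S hS n)
  | 0 => good_base
  | (n+1) => by
      have ih := good_chain S hS n
      show Good (n+1) (next S hS n (chain S hS n))
      rw [next, dif_pos ih]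
      exact (Classical.choose_spec (step (S n) (hS n) n _ ih)).1

theorem link_chain (S : ℕ → Set XX) (hS : ∀ n, StronglyPorous (S n)) (n : ℕ) :
    Link (S n) n (chain S hS n) (chain S hS (n+1)) := by
  have ih := good_chain S hS n
  show Link (S n) n _ (next S hS n (chain S hS n))
  rw [next, dif_pos ih]
  exact Classical.choose_spec (step (S n) (hS n) n _ ih)

theorem clamp_lip (a b : ℝ) : |max 0 (min a 1) - max 0 (min b 1)| ≤ |a - b| := by
  have h1 : |min a 1 - min b 1| ≤ |a - b| := by
    have h := abs_max_sub_max_le_abs (-a) (-b) (-1)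
    have emm : ∀ x : ℝ, max (-x) (-1) = -(min x 1) := by
      intro x
      rcases le_total x 1 with hx | hx
      · rw [min_eq_left hx, max_eq_left (neg_le_neg hx)]
      · rw [min_eq_right hx, max_eq_right (neg_le_neg hx)]
    have e1 : max (-a) (-1) = -(min a 1) := emm a
    have e2 : max (-b) (-1) = -(min b 1) := emm b
    rw [e1, e2] at h
    have e3 : -(min a 1) - -(min b 1) = min b 1 - min a 1 := by ring
    have e4 : (-a) - (-b) = b - a := by ring
    rw [e3, e4] at h
    rw [abs_sub_comm]
    rw [abs_sub_comm a b]
    exact h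
  have h2 := abs_max_sub_max_le_abs (min a 1) (min b 1) 0
  rw [max_comm (0:ℝ) (min a 1), max_comm (0:ℝ) (min b 1)]
  calc |min a 1 ⊔ 0 - min b 1 ⊔ 0| ≤ |min a 1 - min b 1| := h2
    _ ≤ |a - b| := h1

end AuxAttr


/-- The family `A[0,1]` of attractors of iterated function systems acting on `[0,1]`
is not σ-strongly porous in the hyperspace `K([0,1])` of nonempty compact subsets of
`[0,1]` with the Hausdorff metric. -/
theorem attractors_not_sigmaStronglyPorous :
    ¬ SigmaStronglyPorous
        {A : NonemptyCompacts (Set.Icc (0 : ℝ) 1) |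
          IsIFSAttractor (A : Set (Set.Icc (0 : ℝ) 1))} := by
  classical
  rintro ⟨S, hS, hcover⟩
  have hgood := AuxAttr.good_chain S hS
  have hlink := AuxAttr.link_chain S hS
  set ch : ℕ → AuxAttr.SD := AuxAttr.chain S hS with hch
  have epos : ∀ n, 0 < (ch n).e := fun n => (hgood n).2.2.2.1
  have he1 : ∀ n, (ch n).e ≤ 1/100 := fun n => (hgood n).2.2.2.2
  have helink : ∀ n, (ch (n+1)).e ≤ (ch n).e / 1000000 := fun n => (hlink n).2.1
  have hdrift : ∀ n ω, |(ch (n+1)).x ω - (ch n).x ω| ≤ 2*(ch (n+1)).e :=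
    fun n => (hlink n).2.2.1
  have hepow : ∀ n, (ch n).e ≤ (1/100) * (1/1000000)^n := by
    intro n; induction n with
    | zero => simpa using he1 0
    | succ n ih =>
        calc (ch (n+1)).e ≤ (ch n).e/1000000 := helink n
          _ ≤ ((1/100)*(1/1000000)^n)/1000000 := by linarith
          _ = (1/100)*(1/1000000)^(n+1) := by ring
  have htail : ∀ m (ω : ℕ → Bool) m', m ≤ m' →
      |(ch m').x ω - (ch m).x ω| ≤ 3*(ch (m+1)).e - 3*(ch (m'+1)).e := by
    intro m ω m' h
    induction m', h using Nat.le_induction with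
    | base => simp
    | succ m' hm ih =>
        have h1 := hdrift m' ω
        have h2 := helink (m'+1)
        have h3 := epos (m'+2)
        have key := abs_sub_le ((ch (m'+1)).x ω) ((ch m').x ω) ((ch m).x ω)
        linarith
  have htail' : ∀ m (ω : ℕ → Bool) m', m ≤ m' →
      |(ch m').x ω - (ch m).x ω| ≤ 3*(ch (m+1)).e := by
    intro m ω m' h
    have := htail m ω m' h
    have := epos (m'+1)
    linarith
  have hcauchy : ∀ ω : ℕ → Bool, ∃ L, Tendsto (fun n => (ch n).x ω) atTop (𝓝 L) := by
    intro ω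
    apply cauchySeq_tendsto_of_complete
    apply cauchySeq_of_le_geometric (1/1000000 : ℝ) 1 (by norm_num)
    intro n
    have h1 := hdrift n ω
    have h2 := hepow (n+1)
    have hp : (0:ℝ) ≤ (1/1000000:ℝ)^n := by positivity
    rw [Real.dist_eq, abs_sub_comm]
    have hpow : ((1:ℝ)/1000000)^(n+1) = (1/1000000)^n * (1/1000000) := pow_succ _ n
    rw [hpow] at h2
    nlinarith
  choose xinf hxinf using hcauchy
  have htailinf : ∀ m (ω : ℕ → Bool), |xinf ω - (ch m).x ω| ≤ 3*(ch (m+1)).e := by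
    intro m ω
    have hcv : Tendsto (fun m' => |(ch m').x ω - (ch m).x ω|) atTop
        (𝓝 |xinf ω - (ch m).x ω|) := ((hxinf ω).sub tendsto_const_nhds).abs
    exact le_of_tendsto hcv (eventually_atTop.2 ⟨m, fun m' h => htail' m ω m' h⟩)
  have hxinfI : ∀ ω : ℕ → Bool, xinf ω ∈ Set.Icc (0:ℝ) 1 := fun ω =>
    isClosed_Icc.mem_of_tendsto (hxinf ω)
      (Filter.Eventually.of_forall fun n => (hgood n).2.1 ω)
  have firstdiff : ∀ {ω ω' : ℕ → Bool}, ω ≠ ω' →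
      ∃ j, ω j ≠ ω' j ∧ ∀ i < j, ω i = ω' i := by
    intro ω ω' hne
    have hex : ∃ i, ω i ≠ ω' i := by
      by_contra h; push_neg at h; exact hne (funext h)
    exact ⟨Nat.find hex, Nat.find_spec hex, fun i hi => not_not.mp (Nat.find_min hex hi)⟩
  have hlower : ∀ {ω ω' : ℕ → Bool} {j}, ω j ≠ ω' j → (∀ i < j, ω i = ω' i) →
      (ch (j+1)).e/250 ≤ |xinf ω - xinf ω'| := by
    intro ω ω' j hj hmin
    have h1 : (ch (j+1)).e/200 ≤ |(ch (j+1)).x ω - (ch (j+1)).x ω'| :=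
      (hgood (j+1)).2.2.1 ω ω' ⟨j, Nat.lt_succ_self j, hj⟩
    have h2 := htailinf (j+1) ω
    have h3 := htailinf (j+1) ω'
    have h4 := helink (j+1)
    have h5 := epos (j+1)
    have h6 := epos (j+1+1)
    have key : |(ch (j+1)).x ω - (ch (j+1)).x ω'|
        ≤ |(ch (j+1)).x ω - xinf ω| + |xinf ω - xinf ω'| + |xinf ω' - (ch (j+1)).x ω'| := by
      have t1 := abs_sub_le ((ch (j+1)).x ω) (xinf ω) ((ch (j+1)).x ω')
      have t2 := abs_sub_le (xinf ω) (xinf ω') ((ch (j+1)).x ω')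
      linarith
    have h2' : |(ch (j+1)).x ω - xinf ω| ≤ 3*(ch (j+1+1)).e := by
      rw [abs_sub_comm]; exact h2
    have h3' : |xinf ω' - (ch (j+1)).x ω'| ≤ 3*(ch (j+1+1)).e := h3
    linarith
  have hupper : ∀ (J : ℕ) (ω ω' : ℕ → Bool), (∀ i < J, ω i = ω' i) →
      |xinf ω - xinf ω'| ≤ 6*(ch (J+1)).e := by
    intro J ω ω' hag
    have h0 : (ch J).x ω = (ch J).x ω' := (hgood J).1 ω ω' hag
    have h2 := htailinf J ω
    have h3 := htailinf J ω'
    have key : xinf ω - xinf ω' = (xinf ω - (ch J).x ω) + ((ch J).x ω' - xinf ω') := by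
      rw [h0]; ring
    calc |xinf ω - xinf ω'|
        = |(xinf ω - (ch J).x ω) + ((ch J).x ω' - xinf ω')| := by rw [key]
      _ ≤ |xinf ω - (ch J).x ω| + |(ch J).x ω' - xinf ω'| := abs_add_le _ _
      _ ≤ 6*(ch (J+1)).e := by
          rw [abs_sub_comm ((ch J).x ω') (xinf ω')]
          linarith
  have hinj : Function.Injective xinf := by
    intro ω ω' h
    by_contra hne
    obtain ⟨j, hj, hmin⟩ := firstdiff hne
    have hl := hlower hj hmin
    rw [h, sub_self, abs_zero] at hl
    have := epos (j+1)
    linarith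
  -- the compact set
  have hcont : Continuous (fun ω : ℕ → Bool => (⟨xinf ω, hxinfI ω⟩ : Set.Icc (0:ℝ) 1)) := by
    apply Continuous.subtype_mk
    rw [continuous_iff_continuousAt]
    intro ω
    apply Metric.tendsto_nhds.mpr
    intro ε hε
    obtain ⟨J, hJ⟩ : ∃ J, 6*(ch (J+1)).e < ε := by
      obtain ⟨J, hJ⟩ := exists_pow_lt_of_lt_one (x := ε*100/6)
        (by positivity) (by norm_num : (1:ℝ)/1000000 < 1)
      refine ⟨J, ?_⟩
      have := hepow (J+1)
      have hmono : ((1:ℝ)/1000000)^(J+1) ≤ ((1:ℝ)/1000000)^J :=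
        pow_le_pow_of_le_one (by norm_num) (by norm_num) (Nat.le_succ J)
      nlinarith
    have hopen : IsOpen {ω' : ℕ → Bool | ∀ i < J, ω' i = ω i} := by
      have heq : {ω' : ℕ → Bool | ∀ i < J, ω' i = ω i}
          = ⋂ i ∈ Finset.range J, (fun ω' : ℕ → Bool => ω' i) ⁻¹' {ω i} := by
        ext ω'; simp [Finset.mem_range]
      rw [heq]
      exact isOpen_biInter_finset fun i _ =>
        (continuous_apply i).isOpen_preimage _ (isOpen_discrete _)
    have hmem : {ω' : ℕ → Bool | ∀ i < J, ω' i = ω i} ∈ 𝓝 ω := hopen.mem_nhds (by simp)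
    filter_upwards [hmem] with ω' hω'
    rw [Real.dist_eq]
    calc |xinf ω' - xinf ω| ≤ 6*(ch (J+1)).e := hupper J ω' ω hω'
      _ < ε := hJ
  set ξ : (ℕ → Bool) → Set.Icc (0:ℝ) 1 := fun ω => ⟨xinf ω, hxinfI ω⟩ with hξ
  set Z : AuxAttr.XX := ⟨⟨Set.range ξ, isCompact_range hcont⟩, Set.range_nonempty _⟩ with hZ
  have hZcoe : (Z : Set (Set.Icc (0:ℝ) 1)) = Set.range ξ := rfl
  -- Z avoids every S m
  have havoid : ∀ m, Z ∉ S m := by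
    intro m hmem
    have hl := hlink m
    have he' := epos (m+1)
    have hlk := helink (m+1)
    have he'' := epos (m+1+1)
    have hdist : dist Z ((ch (m+1)).c) ≤ (8/10)*(ch (m+1)).e := by
      rw [Metric.NonemptyCompacts.dist_eq]
      apply hausdorffDist_le_of_mem_dist (by positivity)
      · rintro z hz
        rw [hZcoe] at hz
        obtain ⟨ω, rfl⟩ := hz
        obtain ⟨t, htc, htd⟩ := hl.2.2.2.2.2.2.2 ω
        refine ⟨t, htc, ?_⟩
        rw [Subtype.dist_eq, Real.dist_eq]
        have h2 := htailinf (m+1) ω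
        have key := abs_sub_le (xinf ω) ((ch (m+1)).x ω) ((t:ℝ))
        show |xinf ω - (t:ℝ)| ≤ (8/10)*(ch (m+1)).e
        linarith
      · intro t htc
        obtain ⟨ω, hω⟩ := hl.2.2.2.2.2.2.1 t htc
        refine ⟨ξ ω, by rw [hZcoe]; exact ⟨ω, rfl⟩, ?_⟩
        rw [Subtype.dist_eq, Real.dist_eq]
        have h2 := htailinf (m+1) ω
        have key := abs_sub_le ((t:ℝ)) ((ch (m+1)).x ω) (xinf ω)
        have hω' : |(t:ℝ) - (ch (m+1)).x ω| ≤ 7/10*(ch (m+1)).e := by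
          rw [abs_sub_comm]; exact hω
        have h2' : |(ch (m+1)).x ω - xinf ω| ≤ 3*(ch (m+1+1)).e := by
          rw [abs_sub_comm]; exact h2
        show |(t:ℝ) - xinf ω| ≤ (8/10)*(ch (m+1)).e
        linarith
    have hball : Z ∈ Metric.closedBall ((ch (m+1)).c) ((ch (m+1)).r) := by
      rw [Metric.mem_closedBall]
      have h9 := hl.2.2.2.2.2.1
      linarith
    have hdisj := hl.2.2.2.2.1
    rw [Set.eq_empty_iff_forall_notMem] at hdisj
    exact hdisj Z ⟨hball, hmem⟩
  -- the IFS structure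
  let cons : Bool → (ℕ → Bool) → (ℕ → Bool) := fun b ω i => Nat.casesOn i b (fun k => ω k)
  have hcons0 : ∀ b ω, cons b ω 0 = b := fun _ _ => rfl
  have hconss : ∀ b ω k, cons b ω (k+1) = ω k := fun _ _ _ => rfl
  let fraw : Bool → ℝ → ℝ := fun b t =>
    if h : ∃ ω, xinf ω = t then xinf (cons b (Classical.choose h)) else 0
  have hfraw : ∀ b ω, fraw b (xinf ω) = xinf (cons b ω) := by
    intro b ω
    have h : ∃ ω', xinf ω' = xinf ω := ⟨ω, rfl⟩
    simp only [fraw, dif_pos h]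
    rw [hinj (Classical.choose_spec h)]
  have hlip : ∀ (b : Bool), ∀ t ∈ Set.range xinf, ∀ t' ∈ Set.range xinf,
      |fraw b t - fraw b t'| ≤ (1/2)*|t - t'| := by
    rintro b t ⟨ω, rfl⟩ t' ⟨ω', rfl⟩
    rcases eq_or_ne ω ω' with rfl | hne
    · simp
    · obtain ⟨j, hj, hmin⟩ := firstdiff hne
      rw [hfraw, hfraw]
      have hup : |xinf (cons b ω) - xinf (cons b ω')| ≤ 6*(ch (j+1+1)).e := by
        apply hupper (j+1)
        intro i hi
        cases i with
        | zero => rfl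
        | succ k =>
            have hk : k < j := by omega
            show cons b ω (k+1) = cons b ω' (k+1)
            exact hmin k hk
      have hlo := hlower hj hmin
      have h4 := helink (j+1)
      have h5 := epos (j+1)
      have h6 := epos (j+1+1)
      calc |xinf (cons b ω) - xinf (cons b ω')| ≤ 6*(ch (j+1+1)).e := hup
        _ ≤ (1/2)*((ch (j+1)).e/250) := by linarith
        _ ≤ (1/2)*|xinf ω - xinf ω'| := by linarith
  have hlipOn : ∀ b : Bool, LipschitzOnWith (1/2 : NNReal) (fraw b) (Set.range xinf) := by
    intro b
    rw [lipschitzOnWith_iff_dist_le_mul]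
    intro t ht t' ht'
    rw [Real.dist_eq, Real.dist_eq]
    have h := hlip b t ht t' ht'
    have hcoe : ((1/2 : NNReal) : ℝ) = 1/2 := by norm_num
    rw [hcoe]
    exact h
  choose g hg using fun b => (hlipOn b).extend_real
  let cl : ℝ → ℝ := fun t => max 0 (min t 1)
  have hclmem : ∀ t, cl t ∈ Set.Icc (0:ℝ) 1 := fun t =>
    ⟨le_max_left _ _, max_le (by norm_num) (min_le_right _ _)⟩
  have hclid : ∀ t ∈ Set.Icc (0:ℝ) 1, cl t = t := by
    rintro t ⟨h0, h1⟩
    show max 0 (min t 1) = t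
    rw [min_eq_left h1, max_eq_right h0]
  let F : Bool → (Set.Icc (0:ℝ) 1 → Set.Icc (0:ℝ) 1) := fun b t => ⟨cl (g b ↑t), hclmem _⟩
  have hFcontr : ∀ b, IsContraction (F b) := by
    intro b
    refine ⟨1/2, by norm_num, by norm_num, ?_⟩
    intro s t
    rw [Subtype.dist_eq, Subtype.dist_eq, Real.dist_eq, Real.dist_eq]
    show |cl (g b ↑s) - cl (g b ↑t)| ≤ 1/2 * |(s:ℝ) - (t:ℝ)|
    calc |cl (g b ↑s) - cl (g b ↑t)| ≤ |g b ↑s - g b ↑t| := AuxAttr.clamp_lip _ _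
      _ ≤ 1/2 * |(s:ℝ) - (t:ℝ)| := by
          have := (hg b).1.dist_le_mul (s:ℝ) (t:ℝ)
          rw [Real.dist_eq, Real.dist_eq] at this
          have hcoe : ((1/2 : NNReal) : ℝ) = 1/2 := by norm_num
          rw [hcoe] at this
          exact this
  have hFeq : ∀ b ω, F b (ξ ω) = ξ (cons b ω) := by
    intro b ω
    apply Subtype.ext
    show cl (g b (xinf ω)) = xinf (cons b ω)
    rw [← (hg b).2 ⟨ω, rfl⟩, hfraw]
    exact hclid _ (hxinfI _)
  let ff : Fin (1+1) → (Set.Icc (0:ℝ) 1 → Set.Icc (0:ℝ) 1) := ![F false, F true]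
  have hZeq : (Z : Set (Set.Icc (0:ℝ) 1)) = ⋃ i, ff i '' (Z : Set (Set.Icc (0:ℝ) 1)) := by
    rw [hZcoe]
    apply Set.Subset.antisymm
    · rintro - ⟨ω, rfl⟩
      have htl : ξ ω = F (ω 0) (ξ (fun k => ω (k+1))) := by
        rw [hFeq]
        congr 1
        funext i
        cases i with
        | zero => rfl
        | succ k => rfl
      rw [Set.mem_iUnion]
      cases hb : ω 0
      · refine ⟨0, ⟨ξ (fun k => ω (k+1)), ⟨_, rfl⟩, ?_⟩⟩
        show ff 0 (ξ (fun k => ω (k+1))) = ξ ω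
        rw [show ff 0 = F false from rfl, ← hb, ← htl]
      · refine ⟨1, ⟨ξ (fun k => ω (k+1)), ⟨_, rfl⟩, ?_⟩⟩
        show ff 1 (ξ (fun k => ω (k+1))) = ξ ω
        rw [show ff 1 = F true from rfl, ← hb, ← htl]
    · rintro t ht
      simp only [Set.mem_iUnion, Set.mem_image] at ht
      obtain ⟨i, z, ⟨ω, rfl⟩, rfl⟩ := ht
      fin_cases i
      · exact ⟨cons false ω, (hFeq false ω).symm⟩
      · exact ⟨cons true ω, (hFeq true ω).symm⟩
  have hattr : Z ∈ {A : NonemptyCompacts (Set.Icc (0 : ℝ) 1) |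
      IsIFSAttractor (A : Set (Set.Icc (0 : ℝ) 1))} := by
    refine ⟨1, ff, ?_, hZeq⟩
    intro i
    fin_cases i
    · exact hFcontr false
    · exact hFcontr true
  rw [hcover] at hattr
  obtain ⟨m, hm⟩ := Set.mem_iUnion.mp hattr
  exact havoid m hm
end
end

section
/- For every d ∈ ℕ, the set A_w[0,1]^d \ A[0,1]^d of weak IFS attractors that are not IFS attractors is dense in the hyperspace K([0,1]^d) of nonempty compact subsets of [0,1]^d with the Hausdorff metric. -/
open Metric Set Filter Topology TopologicalSpace

/-- The unit cube `[0,1]^d` inside `ℝ^d`. -/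
def unitCube (d : ℕ) : Set (Fin d → ℝ) := Set.univ.pi fun _ => Set.Icc (0 : ℝ) 1

/-- A weak contraction on a metric space: distances of distinct points strictly decrease. -/
def IsWeakContraction {X : Type*} [MetricSpace X] (f : X → X) : Prop :=
  ∀ x y, x ≠ y → dist (f x) (f y) < dist x y

/-- `A` is an attractor of a weak iterated function system: it is the union of its images
under finitely many weak contractions. -/
def IsWeakIFSAttractor {X : Type*} [MetricSpace X] (A : Set X) : Prop :=
  ∃ (n : ℕ) (f : Fin (n + 1) → X → X),
    (∀ i, IsWeakContraction (f i)) ∧ A = ⋃ i, f i '' A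

noncomputable section

/-- the slow sequence `1 / log (n+3)` -/
def xseq (n : ℕ) : ℝ := (Real.log (n + 3))⁻¹

/-- the shift function whose orbit is `xseq` -/
def sig (t : ℝ) : ℝ := if t ≤ 0 then 0 else (Real.log (1 + Real.exp t⁻¹))⁻¹

lemma log_n3_pos (n : ℕ) : 0 < Real.log (n + 3) := by
  apply Real.log_pos; push_cast; linarith [Nat.cast_nonneg (α := ℝ) n]

lemma log_n3_gt_one (n : ℕ) : 1 < Real.log (n + 3) := by
  rw [show (1:ℝ) = Real.log (Real.exp 1) by simp]
  apply Real.log_lt_log (Real.exp_pos 1)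
  have := Real.exp_one_lt_d9
  have : (n:ℝ) ≥ 0 := Nat.cast_nonneg n
  linarith [Real.exp_one_lt_d9]

lemma xseq_pos (n : ℕ) : 0 < xseq n := inv_pos.2 (log_n3_pos n)

lemma xseq_lt_one (n : ℕ) : xseq n < 1 := by
  rw [xseq, inv_lt_one_iff₀]; right; exact log_n3_gt_one n

lemma xseq_strictAnti : StrictAnti xseq := by
  intro m n hmn
  apply inv_strictAnti₀ (log_n3_pos m)
  apply Real.log_lt_log (by positivity)
  push_cast; exact by exact_mod_cast by push_cast; linarith [ (Nat.cast_lt (α := ℝ)).2 hmn ]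

lemma xseq_antitone : Antitone xseq := xseq_strictAnti.antitone

lemma xseq_le_x0 (n : ℕ) : xseq n ≤ xseq 0 := xseq_antitone (Nat.zero_le n)

lemma xseq_tendsto : Tendsto xseq atTop (nhds 0) := by
  apply Tendsto.inv_tendsto_atTop
  apply Real.tendsto_log_atTop.comp
  apply tendsto_atTop_add_const_right
  exact tendsto_natCast_atTop_atTop

lemma sig_xseq (n : ℕ) : sig (xseq n) = xseq (n + 1) := by
  have h1 : ¬ (xseq n ≤ 0) := not_le.2 (xseq_pos n)
  rw [sig, if_neg h1, xseq, xseq, inv_inv, Real.exp_log (by positivity)]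
  push_cast; ring_nf

lemma sig_zero : sig 0 = 0 := by rw [sig, if_pos le_rfl]

lemma sig_lt_self {t : ℝ} (ht : 0 < t) : sig t < t := by
  rw [sig, if_neg (not_le.2 ht)]
  have h1 : Real.exp t⁻¹ < 1 + Real.exp t⁻¹ := by linarith [Real.exp_pos t⁻¹]
  have h2 : t⁻¹ < Real.log (1 + Real.exp t⁻¹) := by
    calc t⁻¹ = Real.log (Real.exp t⁻¹) := (Real.log_exp _).symm
    _ < _ := Real.log_lt_log (Real.exp_pos _) h1
  calc (Real.log (1 + Real.exp t⁻¹))⁻¹ < t⁻¹⁻¹ :=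
        inv_strictAnti₀ (by positivity) h2
  _ = t := inv_inv t

lemma sig_pos {t : ℝ} (ht : 0 < t) : 0 < sig t := by
  rw [sig, if_neg (not_le.2 ht)]
  apply inv_pos.2
  apply Real.log_pos
  linarith [Real.exp_pos t⁻¹]

lemma sig_nonneg (t : ℝ) : 0 ≤ sig t := by
  rcases le_or_gt t 0 with h | h
  · rw [sig, if_pos h]
  · exact (sig_pos h).le

lemma sig_strictMonoOn : StrictMonoOn sig (Set.Ioi (0:ℝ)) := by
  intro v hv u hu hvu
  simp only [Set.mem_Ioi] at hv hu
  rw [sig, if_neg (not_le.2 hv), sig, if_neg (not_le.2 hu)]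
  apply inv_strictAnti₀
  · apply Real.log_pos; linarith [Real.exp_pos u⁻¹]
  · apply Real.log_lt_log (by positivity)
    have : u⁻¹ < v⁻¹ := by exact inv_strictAnti₀ hv hvu
    linarith [Real.exp_lt_exp.2 this]

lemma sig_monotoneOn : MonotoneOn sig (Set.Ici (0:ℝ)) := by
  intro v hv u hu hvu
  rcases eq_or_lt_of_le hvu with rfl | h
  · exact le_rfl
  · rcases eq_or_lt_of_le (Set.mem_Ici.1 hv) with hv' | hv'
    · rw [← hv', sig_zero]; exact sig_nonneg u
    · exact (sig_strictMonoOn hv' (Set.mem_Ioi.2 (hv'.trans h)) h).le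

/-- key monotonicity : `t - sig t` is strictly monotone on `(0, ∞)`. -/
lemma sig_gap_strictMono {v u : ℝ} (hv : 0 < v) (hvu : v < u) :
    sig u - sig v < u - v := by
  have hu : 0 < u := hv.trans hvu
  rw [sig, if_neg (not_le.2 hu), sig, if_neg (not_le.2 hv)]
  set a := u⁻¹ with ha
  set b := v⁻¹ with hb
  have hab : a < b := inv_strictAnti₀ hv hvu
  have ha0 : 0 < a := inv_pos.2 hu
  have hb0 : 0 < b := inv_pos.2 hv
  have hu' : u = a⁻¹ := by rw [ha, inv_inv]
  have hv' : v = b⁻¹ := by rw [hb, inv_inv]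
  rw [hu', hv']
  have key : ∀ x : ℝ, 0 < x →
      x⁻¹ - (Real.log (1 + Real.exp x))⁻¹ =
        Real.log (1 + Real.exp (-x)) / (x * Real.log (1 + Real.exp x)) := by
    intro x hx
    have hlx : 0 < Real.log (1 + Real.exp x) := by
      apply Real.log_pos; linarith [Real.exp_pos x]
    have hsplit : (1 : ℝ) + Real.exp x = Real.exp x * (1 + Real.exp (-x)) := by
      rw [mul_add, mul_one, ← Real.exp_add, add_neg_cancel, Real.exp_zero]; ring
    have hnum : Real.log (1 + Real.exp x) = x + Real.log (1 + Real.exp (-x)) := by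
      rw [hsplit, Real.log_mul (Real.exp_ne_zero x) (by positivity), Real.log_exp]
    rw [hnum]
    have hx' : x ≠ 0 := ne_of_gt hx
    have hlx' : x + Real.log (1 + Real.exp (-x)) ≠ 0 := by rw [← hnum]; exact ne_of_gt hlx
    field_simp
    ring
  have hnum_lt : Real.log (1 + Real.exp (-b)) < Real.log (1 + Real.exp (-a)) := by
    apply Real.log_lt_log (by positivity)
    linarith [Real.exp_lt_exp.2 (neg_lt_neg hab)]
  have hnum_pos : 0 < Real.log (1 + Real.exp (-b)) := by
    apply Real.log_pos; linarith [Real.exp_pos (-b)]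
  have hla : 0 < Real.log (1 + Real.exp a) := by
    apply Real.log_pos; linarith [Real.exp_pos a]
  have hden_lt : a * Real.log (1 + Real.exp a) < b * Real.log (1 + Real.exp b) := by
    have h1 : Real.log (1 + Real.exp a) < Real.log (1 + Real.exp b) := by
      apply Real.log_lt_log (by positivity)
      linarith [Real.exp_lt_exp.2 hab]
    nlinarith
  have hden_pos : 0 < a * Real.log (1 + Real.exp a) := by positivity
  have hden_pos' : 0 < b * Real.log (1 + Real.exp b) := hden_pos.trans hden_lt
  have goal' : b⁻¹ - (Real.log (1 + Real.exp b))⁻¹ < a⁻¹ - (Real.log (1 + Real.exp a))⁻¹ := by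
    rw [key a ha0, key b hb0, div_lt_div_iff₀ hden_pos' hden_pos]
    nlinarith
  linarith

/-- weak contraction property of `sig` on `[0,∞)` -/
lemma sig_weak {a b : ℝ} (ha : 0 ≤ a) (hb : 0 ≤ b) (hab : a ≠ b) :
    |sig a - sig b| < |a - b| := by
  wlog h : b < a generalizing a b
  · rw [abs_sub_comm, abs_sub_comm a b]
    exact this hb ha (Ne.symm hab) (lt_of_le_of_ne (not_lt.1 h) hab)
  · have hmono : sig b ≤ sig a := sig_monotoneOn hb ha h.le
    rw [abs_of_nonneg (by linarith), abs_of_pos (by linarith)]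
    rcases eq_or_lt_of_le hb with rfl | hb'
    · rw [sig_zero]; simpa using sig_lt_self (by linarith)
    · exact sig_gap_strictMono hb' h

def clampx (t : ℝ) : ℝ := min (max t 0) (xseq 0)

lemma clampx_nonneg (t : ℝ) : 0 ≤ clampx t :=
  le_min (le_max_right t 0) (xseq_pos 0).le

lemma clampx_le (t : ℝ) : clampx t ≤ xseq 0 := min_le_right _ _

lemma clampx_lip (a b : ℝ) : |clampx a - clampx b| ≤ |a - b| := by
  have h1 : |max a 0 - max b 0| ≤ |a - b| := abs_max_sub_max_le_abs a b 0
  calc |clampx a - clampx b| ≤ max |max a 0 - max b 0| |xseq 0 - xseq 0| :=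
        abs_min_sub_min_le_max _ _ _ _
  _ = |max a 0 - max b 0| := by simp
  _ ≤ |a - b| := h1

lemma clampx_of_nonpos {t : ℝ} (h : t ≤ 0) : clampx t = 0 := by
  rw [clampx, max_eq_right h, min_eq_left (xseq_pos 0).le]

lemma clampx_of_ge {t : ℝ} (h : xseq 0 ≤ t) : clampx t = xseq 0 := by
  rw [clampx, max_eq_left (le_trans (xseq_pos 0).le h), min_eq_right h]

lemma clampx_xseq (n : ℕ) : clampx (xseq n) = xseq n := by
  rw [clampx, max_eq_left (xseq_pos n).le, min_eq_left (xseq_le_x0 n)]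

lemma mem_unitCube {d : ℕ} {w : Fin d → ℝ} : w ∈ unitCube d ↔ ∀ i, 0 ≤ w i ∧ w i ≤ 1 := by
  constructor
  · intro h i; exact h i (Set.mem_univ i)
  · intro h i _; exact h i

lemma dist_update {d : ℕ} (w : Fin d → ℝ) (i : Fin d) (a b : ℝ) :
    dist (Function.update w i a) (Function.update w i b) = |a - b| := by
  apply le_antisymm
  · refine (dist_pi_le_iff (abs_nonneg _)).2 fun j => ?_
    rcases eq_or_ne j i with rfl | hj
    · simp [Real.dist_eq]
    · simp [Function.update_of_ne hj]
  · have := dist_le_pi_dist (Function.update w i a) (Function.update w i b) i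
    simpa [Real.dist_eq] using this

lemma dist_update_self {d : ℕ} (w : Fin d → ℝ) (i : Fin d) (a : ℝ) :
    dist (Function.update w i a) w = |a - w i| := by
  nth_rewrite 2 [← Function.update_eq_self i w]
  exact dist_update w i a (w i)

section core
variable {d : ℕ} (hd : 1 ≤ d) (δ : ℝ) (p : Fin d → ℝ)

def j0 (hd : 1 ≤ d) : Fin d := ⟨0, hd⟩

def yraw (n : ℕ) : Fin d → ℝ :=
  Function.update p (j0 hd) (p (j0 hd) + δ * xseq n)

def sraw (w : Fin d → ℝ) : Fin d → ℝ :=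
  Function.update p (j0 hd) (p (j0 hd) + δ * sig (clampx ((w (j0 hd) - p (j0 hd)) / δ)))

variable (hδ0 : 0 < δ) (hp : p ∈ unitCube d) (hp1 : p (j0 hd) + δ ≤ 1)

include hδ0 hp hp1 in
lemma yraw_mem (n : ℕ) : yraw hd δ p n ∈ unitCube d := by
  rw [mem_unitCube]
  intro i
  rcases eq_or_ne i (j0 hd) with rfl | hi
  · rw [yraw, Function.update_self]
    constructor
    · have h1 := (mem_unitCube.1 hp (j0 hd)).1
      have h2 := (xseq_pos n).le
      nlinarith
    · have h2 := (xseq_lt_one n).le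
      have h3 := (xseq_pos n).le
      nlinarith
  · rw [yraw, Function.update_of_ne hi]
    exact mem_unitCube.1 hp i

include hδ0 in
lemma dist_yraw_p (n : ℕ) : dist (yraw hd δ p n) p = δ * xseq n := by
  rw [yraw, dist_update_self]
  rw [add_sub_cancel_left, abs_of_pos (by have := xseq_pos n; positivity)]

include hδ0 in
lemma yraw_inj : Function.Injective (yraw hd δ p) := by
  intro n m h
  have : p (j0 hd) + δ * xseq n = p (j0 hd) + δ * xseq m := by
    have := congrFun h (j0 hd)
    simpa [yraw, Function.update_self] using this
  have : xseq n = xseq m := by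
    have hδ := hδ0.ne'
    exact mul_left_cancel₀ hδ (by linarith)
  exact xseq_strictAnti.injective this

include hδ0 in
lemma yraw_ne_p (n : ℕ) : yraw hd δ p n ≠ p := by
  intro h
  have h2 := dist_yraw_p hd δ p hδ0 n
  rw [h, dist_self] at h2
  have := xseq_pos n
  nlinarith

include hδ0 hp hp1 in
lemma sraw_mem (w : Fin d → ℝ) : sraw hd δ p w ∈ unitCube d := by
  rw [mem_unitCube]
  intro i
  rcases eq_or_ne i (j0 hd) with rfl | hi
  · rw [sraw, Function.update_self]
    have h0 := sig_nonneg (clampx ((w (j0 hd) - p (j0 hd)) / δ))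
    have h1 : sig (clampx ((w (j0 hd) - p (j0 hd)) / δ)) ≤ xseq 1 := by
      rw [← sig_xseq 0]
      refine sig_monotoneOn (Set.mem_Ici.2 (clampx_nonneg _))
        (Set.mem_Ici.2 (xseq_pos 0).le) (clampx_le _)
    have h2 := (xseq_lt_one 1).le
    have h3 := (mem_unitCube.1 hp (j0 hd)).1
    constructor
    · nlinarith
    · nlinarith
  · rw [sraw, Function.update_of_ne hi]
    exact mem_unitCube.1 hp i

include hδ0 in
lemma sraw_yraw (n : ℕ) : sraw hd δ p (yraw hd δ p n) = yraw hd δ p (n + 1) := by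
  rw [sraw, yraw, yraw, Function.update_self, add_sub_cancel_left,
    mul_div_cancel_left₀ _ hδ0.ne', clampx_xseq, sig_xseq]

lemma sraw_p : sraw hd δ p p = p := by
  rw [sraw, sub_self, zero_div, clampx_of_nonpos le_rfl, sig_zero, mul_zero, add_zero,
    Function.update_eq_self]

include hδ0 in
lemma sraw_low {w : Fin d → ℝ} (h : w (j0 hd) ≤ p (j0 hd)) : sraw hd δ p w = p := by
  rw [sraw, clampx_of_nonpos (by apply div_nonpos_of_nonpos_of_nonneg <;> linarith),
    sig_zero, mul_zero, add_zero, Function.update_eq_self]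

include hδ0 in
lemma sraw_high {w : Fin d → ℝ} (h : p (j0 hd) + δ * xseq 0 ≤ w (j0 hd)) :
    sraw hd δ p w = yraw hd δ p 1 := by
  rw [sraw, yraw, clampx_of_ge (by rw [le_div_iff₀ hδ0]; linarith), sig_xseq]

include hδ0 in
lemma sraw_weak {w z : Fin d → ℝ} (hwz : w ≠ z) :
    dist (sraw hd δ p w) (sraw hd δ p z) < dist w z := by
  have hdpos : 0 < dist w z := dist_pos.2 hwz
  rw [sraw, sraw, dist_update]
  set aw := (w (j0 hd) - p (j0 hd)) / δ with haw
  set az := (z (j0 hd) - p (j0 hd)) / δ with haz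
  rcases eq_or_ne (sig (clampx aw)) (sig (clampx az)) with he | he
  · rw [he]; simpa using hdpos
  · have hcl : clampx aw ≠ clampx az := fun h => he (by rw [h])
    have h1 : |sig (clampx aw) - sig (clampx az)| < |clampx aw - clampx az| :=
      sig_weak (clampx_nonneg _) (clampx_nonneg _) hcl
    have h2 : |clampx aw - clampx az| ≤ |aw - az| := clampx_lip _ _
    have h3 : |aw - az| = |w (j0 hd) - z (j0 hd)| / δ := by
      rw [haw, haz, div_sub_div_same, abs_div, abs_of_pos hδ0]
      congr 1
      ring
    have h4 : |w (j0 hd) - z (j0 hd)| ≤ dist w z := by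
      have := dist_le_pi_dist w z (j0 hd)
      rwa [Real.dist_eq] at this
    have hre : p (j0 hd) + δ * sig (clampx aw) - (p (j0 hd) + δ * sig (clampx az))
        = δ * (sig (clampx aw) - sig (clampx az)) := by ring
    rw [hre, abs_mul, abs_of_pos hδ0]
    calc δ * |sig (clampx aw) - sig (clampx az)|
        < δ * |aw - az| := by
          apply mul_lt_mul_of_pos_left (lt_of_lt_of_le h1 h2) hδ0
    _ = |w (j0 hd) - z (j0 hd)| := by rw [h3]; field_simp
    _ ≤ dist w z := h4

end core

lemma isCompact_unitCube (d : ℕ) : IsCompact (unitCube d) :=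
  isCompact_univ_pi fun _ => isCompact_Icc

/-- counting helper: if `c ≤ xseq n` then `n + 3 ≤ exp c⁻¹`. -/
lemma xseq_count_upper {c : ℝ} (hc : 0 < c) {n : ℕ} (h : c ≤ xseq n) :
    (n : ℝ) + 3 ≤ Real.exp c⁻¹ := by
  rw [xseq] at h
  have hlog := log_n3_pos n
  have h2 : Real.log (n + 3) ≤ c⁻¹ := by
    rw [← inv_inv (Real.log (n+3))]
    exact inv_anti₀ hc h
  rwa [Real.log_le_iff_le_exp (by positivity)] at h2

/-- counting helper converse: if `n + 3 ≤ exp u` with `u > 0` then `u⁻¹ ≤ xseq n`. -/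
lemma xseq_count_lower {u : ℝ} (hu : 0 < u) {n : ℕ} (h : (n : ℝ) + 3 ≤ Real.exp u) :
    u⁻¹ ≤ xseq n := by
  have hlog := log_n3_pos n
  have h2 : Real.log (n + 3) ≤ u := by
    rwa [Real.log_le_iff_le_exp (by positivity)]
  rw [xseq]
  exact inv_anti₀ hlog h2


section core
variable {d : ℕ} (hd : 1 ≤ d) (δ : ℝ) (p : Fin d → ℝ)

def Araw (F : Finset (Fin d → ℝ)) : Set (Fin d → ℝ) :=
  ↑F ∪ ({p} ∪ Set.range (yraw hd δ p))

variable (hδ0 : 0 < δ) (hp : p ∈ unitCube d) (hp1 : p (j0 hd) + δ ≤ 1)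
variable (F : Finset (Fin d → ℝ))

include hδ0 in
lemma tail_finite {c : ℝ} (hc : 0 < c) :
    {w | w ∈ Araw hd δ p F ∧ c ≤ dist w p}.Finite := by
  have hsub : {w | w ∈ Araw hd δ p F ∧ c ≤ dist w p} ⊆
      ↑F ∪ (yraw hd δ p) '' (Set.Iic ⌊Real.exp (c/δ)⁻¹⌋₊) := by
    rintro w ⟨hw, hcd⟩
    rcases hw with hwF | hwp | ⟨n, rfl⟩
    · exact Or.inl hwF
    · rw [Set.mem_singleton_iff] at hwp
      subst hwp
      rw [dist_self] at hcd
      linarith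
    · refine Or.inr ⟨n, ?_, rfl⟩
      rw [dist_yraw_p hd δ p hδ0 n] at hcd
      have h1 : c / δ ≤ xseq n := (div_le_iff₀' hδ0).2 hcd
      have h2 := xseq_count_upper (by positivity) h1
      simp only [Set.mem_Iic]
      rw [Nat.le_floor_iff (by positivity)]
      linarith
  exact Set.Finite.subset (F.finite_toSet.union ((Set.finite_Iic _).image _)) hsub

include hδ0 in
lemma Araw_closed : IsClosed (Araw hd δ p F) := by
  apply IsSeqClosed.isClosed
  intro u q hu hq
  rcases eq_or_ne q p with rfl | hqp
  · exact Or.inr (Or.inl rfl)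
  · have hR : 0 < dist q p := dist_pos.2 hqp
    obtain ⟨K, hK⟩ := (Metric.tendsto_atTop.1 hq) (dist q p / 2) (by positivity)
    set G := {w | w ∈ Araw hd δ p F ∧ dist q p / 2 ≤ dist w p} with hG
    have hGfin : G.Finite := tail_finite hd δ p hδ0 F (by positivity)
    have hmem : ∀ k, u (k + K) ∈ G := by
      intro k
      refine ⟨hu _, ?_⟩
      have h1 := hK (k + K) (Nat.le_add_left K k)
      have h2 := dist_triangle q (u (k + K)) p
      have h3 := dist_comm q (u (k+K))
      linarith [dist_triangle q (u (k+K)) p]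
    have htend : Filter.Tendsto (fun k => u (k + K)) Filter.atTop (nhds q) :=
      hq.comp (Filter.tendsto_add_atTop_nat K)
    have hqG : q ∈ G :=
      hGfin.isClosed.mem_of_tendsto htend (Filter.Eventually.of_forall hmem)
    exact hqG.1

/-- the sum bound for unions over a fintype -/
lemma ncard_iUnion_le_sum {ι α : Type*} [Fintype ι] (s : ι → Set α) (hf : ∀ i, (s i).Finite) :
    (⋃ i, s i).ncard ≤ ∑ i, (s i).ncard := by
  classical
  have h1 : (⋃ i, s i) = ↑(Finset.univ.biUnion fun i => (hf i).toFinset) := by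
    ext x
    simp [Set.Finite.mem_toFinset]
  rw [h1, Set.ncard_coe_finset]
  refine le_trans Finset.card_biUnion_le (le_of_eq ?_)
  congr 1
  ext i
  rw [Set.ncard_eq_toFinset_card (s i) (hf i)]

end core


section core
variable {d : ℕ} (hd : 1 ≤ d) (δ : ℝ) (p : Fin d → ℝ)
variable (hδ0 : 0 < δ) (hp : p ∈ unitCube d) (hp1 : p (j0 hd) + δ ≤ 1)
variable (F : Finset (Fin d → ℝ))

include hδ0 hp hp1 in
lemma weak_attractor (hFc : ∀ q ∈ F, q ∈ unitCube d)
    (hF : ∀ q ∈ F, q (j0 hd) ≤ p (j0 hd) ∨ p (j0 hd) + δ * xseq 0 ≤ q (j0 hd)) :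
    IsWeakIFSAttractor {w : ↥(unitCube d) | ↑w ∈ Araw hd δ p F} := by
  classical
  set l := F.toList with hl
  set P : ↥(unitCube d) := ⟨p, hp⟩ with hP
  set Y : ℕ → ↥(unitCube d) := fun n => ⟨yraw hd δ p n, yraw_mem hd δ p hδ0 hp hp1 n⟩ with hY
  set fS : ↥(unitCube d) → ↥(unitCube d) :=
    fun w => ⟨sraw hd δ p ↑w, sraw_mem hd δ p hδ0 hp hp1 ↑w⟩ with hfS
  have hPA : ↑P ∈ Araw hd δ p F := Or.inr (Or.inl rfl)
  have hYA : ∀ n, ↑(Y n) ∈ Araw hd δ p F := fun n => Or.inr (Or.inr ⟨n, rfl⟩)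
  refine ⟨l.length + 1, fun i =>
    if h : 2 ≤ (i : ℕ) then
      (fun _ => ⟨l.get ⟨(i : ℕ) - 2, by have := i.isLt; omega⟩,
        hFc _ (Finset.mem_toList.1 (List.get_mem _ _))⟩)
    else if (i : ℕ) = 0 then fS else (fun _ => Y 0), ?_, ?_⟩
  · intro i
    by_cases h2 : 2 ≤ (i : ℕ)
    · simp only [dif_pos h2]
      intro x y hxy
      simpa using dist_pos.2 hxy
    · simp only [dif_neg h2]
      by_cases h0 : (i : ℕ) = 0
      · simp only [if_pos h0]
        intro x y hxy
        rw [Subtype.dist_eq, Subtype.dist_eq]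
        exact sraw_weak hd δ p hδ0 (fun h => hxy (Subtype.ext h))
      · simp only [if_neg h0]
        intro x y hxy
        simpa using dist_pos.2 hxy
  · ext w
    simp only [Set.mem_setOf_eq, Set.mem_iUnion]
    constructor
    · intro hw
      rcases hw with hwF | hwp | ⟨n, hyn⟩
      · obtain ⟨j, hj⟩ := List.mem_iff_get.1 (show (↑w : Fin d → ℝ) ∈ l from Finset.mem_toList.2 hwF)
        have hjlt : (j : ℕ) + 2 < l.length + 1 + 1 := by have := j.isLt; omega
        refine ⟨⟨(j : ℕ) + 2, hjlt⟩, P, hPA, ?_⟩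
        have h2 : 2 ≤ ((⟨(j : ℕ) + 2, hjlt⟩ : Fin (l.length + 1 + 1)) : ℕ) := by simp
        rw [dif_pos h2]
        apply Subtype.ext
        simp only []
        have : ((⟨(j : ℕ) + 2, hjlt⟩ : Fin (l.length + 1 + 1)) : ℕ) - 2 = (j : ℕ) := by simp
        rw [show (⟨((⟨(j : ℕ) + 2, hjlt⟩ : Fin (l.length + 1 + 1)) : ℕ) - 2,
            by have := hjlt; omega⟩ : Fin l.length) = j from Fin.ext (by simp)]
        exact hj
      · rw [Set.mem_singleton_iff] at hwp
        refine ⟨⟨0, by omega⟩, P, hPA, ?_⟩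
        rw [dif_neg (by simp), if_pos rfl]
        exact Subtype.ext (by show sraw hd δ p p = ↑w; rw [sraw_p]; exact hwp.symm)
      · rcases n with _ | n
        · refine ⟨⟨1, by omega⟩, P, hPA, ?_⟩
          rw [dif_neg (by simp), if_neg (by simp)]
          exact Subtype.ext hyn
        · refine ⟨⟨0, by omega⟩, Y n, hYA n, ?_⟩
          rw [dif_neg (by simp), if_pos rfl]
          refine Subtype.ext ?_
          show sraw hd δ p (yraw hd δ p n) = ↑w
          rw [sraw_yraw hd δ p hδ0 n]
          exact hyn
    · rintro ⟨i, a, haA, hfa⟩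
      by_cases h2 : 2 ≤ (i : ℕ)
      · rw [dif_pos h2] at hfa
        refine Or.inl ?_
        rw [← hfa]
        exact Finset.mem_toList.1 (List.get_mem _ _)
      · rw [dif_neg h2] at hfa
        by_cases h0 : (i : ℕ) = 0
        · rw [if_pos h0] at hfa
          have hw : (↑w : Fin d → ℝ) = sraw hd δ p ↑a := by rw [← hfa]
          rcases haA with haF | hap | ⟨n, hn⟩
          · rcases hF _ haF with hlow | hhigh
            · rw [hw, sraw_low hd δ p hδ0 hlow]
              exact Or.inr (Or.inl rfl)
            · rw [hw, sraw_high hd δ p hδ0 hhigh]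
              exact Or.inr (Or.inr ⟨1, rfl⟩)
          · rw [Set.mem_singleton_iff] at hap
            rw [hw, hap, sraw_p]
            exact Or.inr (Or.inl rfl)
          · rw [hw, ← hn, sraw_yraw hd δ p hδ0 n]
            exact Or.inr (Or.inr ⟨n + 1, rfl⟩)
        · rw [if_neg h0] at hfa
          rw [← hfa]
          exact Or.inr (Or.inr ⟨0, rfl⟩)
end core


section core
variable {d : ℕ} (hd : 1 ≤ d) (δ : ℝ) (p : Fin d → ℝ)
variable (hδ0 : 0 < δ) (hp : p ∈ unitCube d) (hp1 : p (j0 hd) + δ ≤ 1)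
variable (F : Finset (Fin d → ℝ))

include hδ0 hp hp1 in
set_option maxHeartbeats 1000000 in
lemma not_attractor : ¬ IsIFSAttractor {w : ↥(unitCube d) | ↑w ∈ Araw hd δ p F} := by
  classical
  rintro ⟨k0, f, hcontr, hcover⟩
  haveI : CompactSpace ↥(unitCube d) := isCompact_iff_compactSpace.1 (isCompact_unitCube d)
  set A := {w : ↥(unitCube d) | ↑w ∈ Araw hd δ p F} with hA
  have hAcomp : IsCompact A :=
    (IsClosed.preimage continuous_subtype_val (Araw_closed hd δ p hδ0 F)).isCompact
  set P : ↥(unitCube d) := ⟨p, hp⟩ with hPdef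
  set Y : ℕ → ↥(unitCube d) := fun n => ⟨yraw hd δ p n, yraw_mem hd δ p hδ0 hp hp1 n⟩ with hYdef
  have hPA : P ∈ A := Or.inr (Or.inl rfl)
  have hYA : ∀ n, Y n ∈ A := fun n => Or.inr (Or.inr ⟨n, rfl⟩)
  have hdY : ∀ n, dist (Y n) P = δ * xseq n := fun n => by
    rw [Subtype.dist_eq]; exact dist_yraw_p hd δ p hδ0 n
  have hYinj : Function.Injective Y := fun n m h =>
    yraw_inj hd δ p hδ0 (congrArg Subtype.val h)
  have hYneP : ∀ n, Y n ≠ P := fun n h => yraw_ne_p hd δ p hδ0 n (congrArg Subtype.val h)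
  -- uniform Lipschitz constant
  set L : ℝ := max 2⁻¹ (Finset.univ.sup' ⟨0, Finset.mem_univ 0⟩ fun i => (hcontr i).choose)
    with hLdef
  have hL1 : L < 1 := by
    apply max_lt (by norm_num)
    refine (Finset.sup'_lt_iff ..).2 ?_
    intro i _
    exact (hcontr i).choose_spec.2.1
  have hL0 : (0:ℝ) < L := lt_of_lt_of_le (by norm_num) (le_max_left _ _)
  have hLip : ∀ i x y, dist (f i x) (f i y) ≤ L * dist x y := by
    intro i x y
    refine le_trans ((hcontr i).choose_spec.2.2 x y)
      (mul_le_mul_of_nonneg_right ?_ dist_nonneg)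
    exact le_trans (Finset.le_sup' (fun i => (hcontr i).choose) (Finset.mem_univ i))
      (le_max_right _ _)
  -- maps with infinitely many sequence points in their image fix P
  set T : Set (Fin (k0+1)) := {i | {n | Y n ∈ f i '' A}.Infinite} with hT
  have hfix : ∀ i ∈ T, f i P = P := by
    intro i hi
    set S := {n | Y n ∈ f i '' A} with hS
    have hSinf : S.Infinite := hi
    have hmem : ∀ j : ℕ, Y (Nat.nth S j) ∈ f i '' A := fun j => Nat.nth_mem_of_infinite hSinf j
    have hmono : StrictMono (Nat.nth S) := Nat.nth_strictMono hSinf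
    set a : ℕ → ↥(unitCube d) := fun j => (hmem j).choose with ha
    have haspec : ∀ j, a j ∈ A ∧ f i (a j) = Y (Nat.nth S j) :=
      fun j => (hmem j).choose_spec
    obtain ⟨x, hxA, φ, hφ, hφtend⟩ := hAcomp.tendsto_subseq (x := a) (fun j => (haspec j).1)
    have hfi_cont : Continuous (f i) := (LipschitzWith.of_dist_le' (K := L) (hLip i)).continuous
    have htend1 : Tendsto (fun j => f i (a (φ j))) atTop (nhds (f i x)) :=
      (hfi_cont.tendsto x).comp hφtend
    have htend2 : Tendsto (fun j => f i (a (φ j))) atTop (nhds P) := by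
      have he : (fun j => f i (a (φ j))) = fun j => Y (Nat.nth S (φ j)) :=
        funext fun j => (haspec (φ j)).2
      rw [he]
      apply tendsto_iff_dist_tendsto_zero.2
      have h0 : Tendsto (fun j => δ * xseq (Nat.nth S (φ j))) atTop (nhds (δ * 0)) :=
        ((xseq_tendsto.comp ((hmono.comp hφ).tendsto_atTop))).const_mul δ
      simpa [hdY] using h0
    have hfx : f i x = P := tendsto_nhds_unique htend1 htend2
    have hxP : x = P := by
      by_contra hxP
      have hane : ∀ j, a (φ j) ≠ x := by
        intro j hax
        exact hYneP _ (by rw [← (haspec (φ j)).2, hax, hfx])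
      have hR : 0 < dist x P := dist_pos.2 hxP
      set G : Set ↥(unitCube d) := {w | w ∈ A ∧ dist x P / 2 ≤ dist w P} with hG
      have hGfin : G.Finite := by
        have hraw := tail_finite hd δ p hδ0 F (c := dist x P / 2) (by positivity)
        refine Set.Finite.subset (Set.Finite.preimage Subtype.val_injective.injOn hraw) ?_
        rintro w ⟨hw1, hw2⟩
        exact ⟨hw1, by rwa [Subtype.dist_eq] at hw2⟩
      have hGx : x ∉ G \ {x} := fun h => h.2 rfl
      have hclosed : IsClosed (G \ {x}) := (hGfin.subset Set.diff_subset).isClosed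
      have hev : ∀ᶠ j in atTop, (fun k => a (φ k)) j ∈ G \ {x} := by
        obtain ⟨N, hN⟩ := (Metric.tendsto_atTop.1 hφtend) (dist x P / 2) (by positivity)
        refine Filter.eventually_atTop.2 ⟨N, fun j hj => ?_⟩
        have h1 := hN j hj
        have h3 : dist x (a (φ j)) < dist x P / 2 := by
          rw [dist_comm]; exact h1
        refine ⟨⟨(haspec (φ j)).1, ?_⟩, hane j⟩
        have h2 := dist_triangle x (a (φ j)) P
        linarith
      exact hGx (hclosed.mem_of_tendsto hφtend hev)
    subst hxP
    exact hfx
  -- exceptional indices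
  set E0 : Set ℕ := {n | Y n ∉ ⋃ i ∈ T, f i '' A} with hE0
  have hE0fin : E0.Finite := by
    have hsub : E0 ⊆ ⋃ i ∈ (Tᶜ : Set (Fin (k0+1))), {n | Y n ∈ f i '' A} := by
      intro n hn
      have h1 : Y n ∈ ⋃ i, f i '' A := by rw [← hcover]; exact hYA n
      obtain ⟨i, hi⟩ := Set.mem_iUnion.1 h1
      have hiT : i ∉ T := fun hiT => hn (Set.mem_biUnion hiT hi)
      exact Set.mem_biUnion hiT hi
    exact Set.Finite.subset (Set.Finite.biUnion (Set.toFinite _)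
      fun i hi => Set.not_infinite.1 hi) hsub
  -- finiteness of counting sets
  have hCfin : ∀ c : ℝ, 0 < c → {n : ℕ | c ≤ δ * xseq n}.Finite := by
    intro c hc
    refine Set.Finite.subset (Set.finite_Iic ⌊Real.exp (c/δ)⁻¹⌋₊) ?_
    intro n hn
    have h1 : c/δ ≤ xseq n := (div_le_iff₀' hδ0).2 hn
    have h2 := xseq_count_upper (by positivity) h1
    simp only [Set.mem_Iic]
    rw [Nat.le_floor_iff (by positivity)]
    linarith
  -- master counting inequality
  have hmaster : ∀ t : ℝ, 0 < t →
      {n : ℕ | t ≤ δ * xseq n}.ncard ≤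
        E0.ncard + (k0+1) * (F.card + 1 + {n : ℕ | t / L ≤ δ * xseq n}.ncard) := by
    intro t ht
    have htL : 0 < t / L := by positivity
    set Ct := {n : ℕ | t ≤ δ * xseq n} with hCt
    set Ct' := {n : ℕ | t / L ≤ δ * xseq n} with hCt'
    set GG : Set ↥(unitCube d) := {w | w ∈ A ∧ t / L ≤ dist w P} with hGG
    have hGGfin : GG.Finite := by
      refine Set.Finite.subset (Set.Finite.preimage Subtype.val_injective.injOn
        (tail_finite hd δ p hδ0 F htL)) ?_
      rintro w ⟨hw1, hw2⟩
      exact ⟨hw1, by rwa [Subtype.dist_eq] at hw2⟩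
    have hGGcard : GG.ncard ≤ F.card + 1 + Ct'.ncard := by
      have himg : Subtype.val '' GG ⊆ (↑F : Set (Fin d → ℝ)) ∪ ({p} ∪ yraw hd δ p '' Ct') := by
        rintro w ⟨v, ⟨hvA, hvd⟩, rfl⟩
        rcases hvA with h | h | ⟨n, hn⟩
        · exact Or.inl h
        · exact Or.inr (Or.inl h)
        · refine Or.inr (Or.inr ⟨n, ?_, hn⟩)
          show t / L ≤ δ * xseq n
          rw [← dist_yraw_p hd δ p hδ0 n]
          rw [Subtype.dist_eq, hPdef] at hvd
          rw [← hn] at hvd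
          exact hvd
      have hfin2 : ((↑F : Set (Fin d → ℝ)) ∪ ({p} ∪ yraw hd δ p '' Ct')).Finite :=
        F.finite_toSet.union ((Set.finite_singleton p).union ((hCfin _ htL).image _))
      calc GG.ncard = (Subtype.val '' GG).ncard :=
            (Set.ncard_image_of_injective _ Subtype.val_injective).symm
      _ ≤ ((↑F : Set (Fin d → ℝ)) ∪ ({p} ∪ yraw hd δ p '' Ct')).ncard :=
            Set.ncard_le_ncard himg hfin2
      _ ≤ (↑F : Set (Fin d → ℝ)).ncard + ({p} ∪ yraw hd δ p '' Ct').ncard :=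
            Set.ncard_union_le _ _
      _ ≤ (↑F : Set (Fin d → ℝ)).ncard + (({p} : Set (Fin d → ℝ)).ncard
            + (yraw hd δ p '' Ct').ncard) := by
            have := Set.ncard_union_le ({p} : Set (Fin d → ℝ)) (yraw hd δ p '' Ct')
            omega
      _ ≤ F.card + 1 + Ct'.ncard := by
            have h1 := Set.ncard_image_le (s := Ct') (f := yraw hd δ p) (hCfin _ htL)
            have h2 : (↑F : Set (Fin d → ℝ)).ncard = F.card := Set.ncard_coe_finset F
            have h3 : ({p} : Set (Fin d → ℝ)).ncard = 1 := Set.ncard_singleton p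
            omega
    -- witnesses
    have hwit : ∀ n ∈ Ct \ E0, ∃ z : Fin (k0+1) × ↥(unitCube d),
        z.1 ∈ T ∧ z.2 ∈ GG ∧ f z.1 z.2 = Y n := by
      intro n hn
      obtain ⟨hnC, hnE⟩ := hn
      have h1 : Y n ∈ ⋃ i ∈ T, f i '' A := not_not.1 hnE
      rw [Set.mem_iUnion₂] at h1
      obtain ⟨i, hiT, hmem⟩ := h1
      obtain ⟨a, haA, hfa⟩ := hmem
      refine ⟨(i, a), hiT, ⟨haA, ?_⟩, hfa⟩
      have h2 : dist (Y n) P ≤ L * dist a P := by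
        conv_lhs => rw [← hfa, ← hfix i hiT]
        exact hLip i a P
      rw [hdY n] at h2
      rw [div_le_iff₀ hL0]
      have : t ≤ L * dist a P := le_trans hnC h2
      linarith [this]
    set zfun : ℕ → Fin (k0+1) × ↥(unitCube d) :=
      fun n => if h : n ∈ Ct \ E0 then (hwit n h).choose else (0, P) with hzfun
    have hz : ∀ n ∈ Ct \ E0, (zfun n).1 ∈ T ∧ (zfun n).2 ∈ GG ∧ f (zfun n).1 (zfun n).2 = Y n := by
      intro n h
      rw [hzfun]
      simp only [dif_pos h]
      exact (hwit n h).choose_spec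
    have hsub2 : (Ct \ E0) ⊆ ⋃ i : Fin (k0+1), {n | n ∈ Ct \ E0 ∧ (zfun n).1 = i} :=
      fun n hn => Set.mem_iUnion.2 ⟨(zfun n).1, hn, rfl⟩
    have hDfin : ∀ i : Fin (k0+1), {n | n ∈ Ct \ E0 ∧ (zfun n).1 = i}.Finite :=
      fun i => Set.Finite.subset (hCfin t ht) (fun n hn => hn.1.1)
    have hDcard : ∀ i : Fin (k0+1), {n | n ∈ Ct \ E0 ∧ (zfun n).1 = i}.ncard ≤ GG.ncard := by
      intro i
      refine Set.ncard_le_ncard_of_injOn (fun n => (zfun n).2) ?_ ?_ hGGfin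
      · intro n hn; exact (hz n hn.1).2.1
      · intro n hn m hm he
        have h1 := (hz n hn.1).2.2
        have h2 := (hz m hm.1).2.2
        have he' : (zfun n).2 = (zfun m).2 := he
        apply hYinj
        rw [← h1, ← h2, hn.2, hm.2, he']
    have hchain : (Ct \ E0).ncard ≤ (k0+1) * GG.ncard := by
      have h1 : (Ct \ E0).ncard ≤ (⋃ i : Fin (k0+1), {n | n ∈ Ct \ E0 ∧ (zfun n).1 = i}).ncard :=
        Set.ncard_le_ncard hsub2 (Set.finite_iUnion hDfin)
      have h2 := ncard_iUnion_le_sum (fun i : Fin (k0+1) => {n | n ∈ Ct \ E0 ∧ (zfun n).1 = i})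
        hDfin
      have h3 : ∑ i : Fin (k0+1), {n | n ∈ Ct \ E0 ∧ (zfun n).1 = i}.ncard
          ≤ ∑ _i : Fin (k0+1), GG.ncard := Finset.sum_le_sum (fun i _ => hDcard i)
      have h4 : ∑ _i : Fin (k0+1), GG.ncard = (k0+1) * GG.ncard := by
        rw [Finset.sum_const, Finset.card_univ, Fintype.card_fin, smul_eq_mul]
      exact h1.trans (h2.trans (h3.trans_eq h4))
    have hsplit : Ct.ncard ≤ E0.ncard + (Ct \ E0).ncard := by
      have h1 : Ct ⊆ E0 ∪ (Ct \ E0) := by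
        intro n hn
        by_cases h : n ∈ E0
        · exact Or.inl h
        · exact Or.inr ⟨hn, h⟩
      have h2 : (E0 ∪ (Ct \ E0)).Finite := hE0fin.union ((hCfin t ht).subset Set.diff_subset)
      exact le_trans (Set.ncard_le_ncard h1 h2) (Set.ncard_union_le _ _)
    have hmul : (k0+1) * GG.ncard ≤ (k0+1) * (F.card + 1 + Ct'.ncard) :=
      Nat.mul_le_mul_left _ hGGcard
    omega
  -- final numeric contradiction
  set Wn : ℕ := E0.ncard + (k0+1) * (F.card + 3) + 5 with hWn
  set W : ℝ := (Wn : ℝ) with hW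
  have hW1 : (1:ℝ) ≤ W := by
    rw [hW]
    have h : (1:ℕ) ≤ Wn := by omega
    exact_mod_cast h
  have hWK : ((k0:ℝ)+1) ≤ W := by
    rw [hW]
    have h : k0 + 1 ≤ Wn := by
      have h2 : k0 + 1 ≤ (k0+1) * (F.card + 3) := Nat.le_mul_of_pos_right _ (by omega)
      omega
    exact_mod_cast h
  set u : ℝ := max 2 ((1 - L)⁻¹ * Real.log (2 * W)) with hu
  have hu2 : (2:ℝ) ≤ u := le_max_left _ _
  have hu0 : (0:ℝ) < u := by linarith
  have hexpLu1 : (1:ℝ) ≤ Real.exp (L * u) := by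
    rw [← Real.exp_zero]
    apply Real.exp_le_exp.2
    positivity
  have h2W : 2 * W ≤ Real.exp ((1 - L) * u) := by
    have h1 : (1 - L)⁻¹ * Real.log (2 * W) ≤ u := le_max_right _ _
    have h2 : 0 < 1 - L := by linarith
    have h3 : Real.log (2 * W) ≤ (1 - L) * u := by
      rw [inv_mul_le_iff₀ h2] at h1
      linarith [h1]
    calc 2 * W = Real.exp (Real.log (2 * W)) := (Real.exp_log (by linarith)).symm
    _ ≤ _ := Real.exp_le_exp.2 h3
  set t : ℝ := δ / u with htdef
  have ht : 0 < t := by positivity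
  -- lower bound on Ct
  have hflr3 : (3:ℕ) ≤ ⌊Real.exp u⌋₊ := by
    rw [Nat.le_floor_iff (Real.exp_pos u).le]
    have := Real.add_one_le_exp (2:ℝ)
    calc (3:ℝ) ≤ Real.exp 2 := by linarith
    _ ≤ Real.exp u := Real.exp_le_exp.2 hu2
  have hlower : Real.exp u - 3 < ({n : ℕ | t ≤ δ * xseq n}.ncard : ℝ) := by
    have hsub : (Set.Iic (⌊Real.exp u⌋₊ - 3) : Set ℕ) ⊆ {n : ℕ | t ≤ δ * xseq n} := by
      intro n hn
      simp only [Set.mem_Iic] at hn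
      have h1 : (n:ℝ) + 3 ≤ Real.exp u := by
        have h2 : n + 3 ≤ ⌊Real.exp u⌋₊ := by omega
        have h3 : ((n + 3 : ℕ) : ℝ) ≤ (⌊Real.exp u⌋₊ : ℝ) := Nat.cast_le.2 h2
        calc (n:ℝ) + 3 = ((n + 3 : ℕ) : ℝ) := by push_cast; ring
        _ ≤ (⌊Real.exp u⌋₊ : ℝ) := h3
        _ ≤ Real.exp u := Nat.floor_le (Real.exp_pos u).le
      have h4 : u⁻¹ ≤ xseq n := xseq_count_lower hu0 h1
      show t ≤ δ * xseq n
      rw [htdef, div_eq_mul_inv]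
      exact mul_le_mul_of_nonneg_left h4 hδ0.le
    have hcard : (Set.Iic (⌊Real.exp u⌋₊ - 3) : Set ℕ).ncard = ⌊Real.exp u⌋₊ - 3 + 1 := by
      rw [← Finset.coe_Iic, Set.ncard_coe_finset, Nat.card_Iic]
    have h5 : (Set.Iic (⌊Real.exp u⌋₊ - 3) : Set ℕ).ncard ≤ {n : ℕ | t ≤ δ * xseq n}.ncard :=
      Set.ncard_le_ncard hsub (hCfin t ht)
    have h6 : Real.exp u - 3 < ((⌊Real.exp u⌋₊ - 3 + 1 : ℕ) : ℝ) := by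
      have h7 := Nat.lt_floor_add_one (Real.exp u)
      have h8 : ((⌊Real.exp u⌋₊ - 3 + 1 : ℕ) : ℝ) = (⌊Real.exp u⌋₊ : ℝ) - 2 := by
        have : (3:ℕ) ≤ ⌊Real.exp u⌋₊ := hflr3
        push_cast [Nat.cast_sub this]
        ring
      rw [h8]
      linarith
    calc Real.exp u - 3 < ((⌊Real.exp u⌋₊ - 3 + 1 : ℕ) : ℝ) := h6
    _ = ((Set.Iic (⌊Real.exp u⌋₊ - 3) : Set ℕ).ncard : ℝ) := by rw [hcard]
    _ ≤ _ := Nat.cast_le.2 h5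
  -- upper bound on Ct'
  have hupper : ({n : ℕ | t / L ≤ δ * xseq n}.ncard : ℝ) ≤ Real.exp (L * u) + 1 := by
    have hsub : {n : ℕ | t / L ≤ δ * xseq n} ⊆ Set.Iic ⌊Real.exp (L * u)⌋₊ := by
      intro n hn
      simp only [Set.mem_setOf_eq] at hn
      have h1 : t / (L * δ) ≤ xseq n := by
        rw [htdef] at hn ⊢
        rw [div_le_iff₀ (by positivity)]
        rw [div_le_iff₀ hL0] at hn
        nlinarith [xseq_pos n]
      have h2 : (0:ℝ) < t / (L * δ) := by positivity
      have h3 := xseq_count_upper h2 h1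
      have h4 : (t / (L * δ))⁻¹ = L * u := by
        rw [htdef]
        field_simp
      rw [h4] at h3
      simp only [Set.mem_Iic]
      rw [Nat.le_floor_iff (Real.exp_pos _).le]
      linarith
    have h5 : {n : ℕ | t / L ≤ δ * xseq n}.ncard ≤ ⌊Real.exp (L * u)⌋₊ + 1 := by
      refine le_trans (Set.ncard_le_ncard hsub (Set.finite_Iic _)) ?_
      rw [← Finset.coe_Iic, Set.ncard_coe_finset, Nat.card_Iic]
    calc ({n : ℕ | t / L ≤ δ * xseq n}.ncard : ℝ) ≤ ((⌊Real.exp (L * u)⌋₊ + 1 : ℕ) : ℝ) :=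
          Nat.cast_le.2 h5
    _ ≤ Real.exp (L * u) + 1 := by
          push_cast
          linarith [Nat.floor_le (Real.exp_pos (L * u)).le]
  -- combine
  have hM := hmaster t ht
  have hMr : ({n : ℕ | t ≤ δ * xseq n}.ncard : ℝ) ≤
      (E0.ncard : ℝ) + ((k0:ℝ)+1) * ((F.card : ℝ) + 1 + ({n : ℕ | t / L ≤ δ * xseq n}.ncard : ℝ)) := by
    exact_mod_cast hM
  have hbig : Real.exp u < W + W * Real.exp (L * u) := by
    have h1 : ((k0:ℝ)+1) * ((F.card : ℝ) + 1 + ({n : ℕ | t / L ≤ δ * xseq n}.ncard : ℝ))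
        ≤ ((k0:ℝ)+1) * ((F.card : ℝ) + 2 + Real.exp (L * u)) := by
      apply mul_le_mul_of_nonneg_left _ (by positivity)
      linarith
    have hKW : ((k0:ℝ)+1) * Real.exp (L * u) ≤ W * Real.exp (L * u) :=
      mul_le_mul_of_nonneg_right hWK (Real.exp_pos _).le
    have hrest : (E0.ncard : ℝ) + ((k0:ℝ)+1) * ((F.card : ℝ) + 2) + 3 ≤ W := by
      rw [hW, hWn]
      push_cast
      nlinarith [Nat.cast_nonneg (α := ℝ) k0, Nat.cast_nonneg (α := ℝ) F.card]
    have hexpand : ((k0:ℝ)+1) * ((F.card : ℝ) + 2 + Real.exp (L * u))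
        = ((k0:ℝ)+1) * ((F.card : ℝ) + 2) + ((k0:ℝ)+1) * Real.exp (L * u) := by ring
    have h2 : (E0.ncard : ℝ) + ((k0:ℝ)+1) * ((F.card : ℝ) + 2 + Real.exp (L * u)) + 3
        ≤ W + W * Real.exp (L * u) := by
      rw [hexpand]
      linarith
    linarith
  have hfinal : W + W * Real.exp (L * u) ≤ Real.exp u := by
    have h1 : W + W * Real.exp (L * u) ≤ 2 * W * Real.exp (L * u) := by nlinarith
    have h2 : 2 * W * Real.exp (L * u) ≤ Real.exp ((1 - L) * u) * Real.exp (L * u) :=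
      mul_le_mul_of_nonneg_right h2W (Real.exp_pos _).le
    have h3 : Real.exp ((1 - L) * u) * Real.exp (L * u) = Real.exp u := by
      rw [← Real.exp_add]
      ring_nf
    linarith
  linarith

end core

/-- For every `d ≥ 1`, the set `A_w[0,1]^d \ A[0,1]^d` of weak IFS attractors that are not
IFS attractors is dense in the hyperspace `K([0,1]^d)` of nonempty compact subsets of
`[0,1]^d` with the Hausdorff metric. -/
theorem weakAttractors_not_attractors_dense (d : ℕ) (hd : 1 ≤ d) :
    Dense {A : NonemptyCompacts (unitCube d) |
      IsWeakIFSAttractor (A : Set (unitCube d)) ∧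
        ¬ IsIFSAttractor (A : Set (unitCube d))} := by
  classical
  rw [Metric.dense_iff]
  intro Q r hr
  haveI : CompactSpace ↥(unitCube d) := isCompact_iff_compactSpace.1 (isCompact_unitCube d)
  set δ : ℝ := min (r / 3) 2⁻¹ with hδdef
  have hδ0 : 0 < δ := lt_min (by linarith) (by norm_num)
  have hδr : δ ≤ r / 3 := min_le_left _ _
  have hδhalf : δ ≤ 2⁻¹ := min_le_right _ _
  set K : Set ↥(unitCube d) := (Q : Set ↥(unitCube d)) with hK
  have hKcomp : IsCompact K := Q.isCompact
  have hKne : K.Nonempty := Q.nonempty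
  -- a finite δ-net inside K
  obtain ⟨net, hnetK, hnetfin, hnetcov⟩ :=
    hKcomp.elim_finite_subcover_image (b := K) (c := fun q => Metric.ball q δ)
      (fun q _ => Metric.isOpen_ball)
      (fun x hx => Set.mem_biUnion hx (Metric.mem_ball_self hδ0))
  obtain ⟨q0, hq0K⟩ := hKne
  obtain ⟨p0, hp0net, _⟩ := Set.mem_iUnion₂.1 (hnetcov hq0K)
  have hp0K : p0 ∈ K := hnetK hp0net
  -- the adjusted center point
  set pr : Fin d → ℝ := Function.update (p0 : Fin d → ℝ) (j0 hd)
    (min ((p0 : Fin d → ℝ) (j0 hd)) (1 - δ)) with hpr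
  have hp0cube := p0.2
  have hprcube : pr ∈ unitCube d := by
    rw [mem_unitCube]
    intro i
    rcases eq_or_ne i (j0 hd) with rfl | hi
    · rw [hpr, Function.update_self]
      constructor
      · apply le_min (mem_unitCube.1 hp0cube (j0 hd)).1
        linarith
      · exact le_trans (min_le_left _ _) (mem_unitCube.1 hp0cube (j0 hd)).2
    · rw [hpr, Function.update_of_ne hi]
      exact mem_unitCube.1 hp0cube i
  have hpr1 : pr (j0 hd) + δ ≤ 1 := by
    rw [hpr, Function.update_self]
    have := min_le_right ((p0 : Fin d → ℝ) (j0 hd)) (1 - δ)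
    linarith
  have hdist_pr_p0 : dist pr (p0 : Fin d → ℝ) ≤ δ := by
    rw [hpr, dist_update_self]
    rw [abs_le]
    have h1 := (mem_unitCube.1 hp0cube (j0 hd)).2
    have h2 := (mem_unitCube.1 hp0cube (j0 hd)).1
    rcases le_total ((p0 : Fin d → ℝ) (j0 hd)) (1 - δ) with h | h
    · rw [min_eq_left h]; constructor <;> linarith
    · rw [min_eq_right h]; constructor <;> linarith
  -- rounding of the net points
  set ρ : ↥(unitCube d) → (Fin d → ℝ) := fun q =>
    if pr (j0 hd) < (q : Fin d → ℝ) (j0 hd) ∧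
        (q : Fin d → ℝ) (j0 hd) < pr (j0 hd) + δ * xseq 0 then
      Function.update (q : Fin d → ℝ) (j0 hd) (pr (j0 hd))
    else (q : Fin d → ℝ) with hρ
  have hρdist : ∀ q : ↥(unitCube d), dist (ρ q) (q : Fin d → ℝ) ≤ δ := by
    intro q
    simp only [hρ]
    split_ifs with h
    · rw [dist_update_self, abs_le]
      have h3 : δ * xseq 0 ≤ δ := by
        nlinarith [xseq_pos 0, xseq_lt_one 0]
      constructor <;> [linarith [h.2]; linarith [h.1]]
    · simp [hδ0.le]
  set F : Finset (Fin d → ℝ) := hnetfin.toFinset.image ρ with hF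
  have hFc : ∀ q ∈ F, q ∈ unitCube d := by
    intro q hq
    rw [hF, Finset.mem_image] at hq
    obtain ⟨w, _, rfl⟩ := hq
    simp only [hρ]
    split_ifs with h
    · rw [mem_unitCube]
      intro i
      rcases eq_or_ne i (j0 hd) with rfl | hi
      · rw [Function.update_self]
        exact mem_unitCube.1 hprcube (j0 hd)
      · rw [Function.update_of_ne hi]
        exact mem_unitCube.1 w.2 i
    · exact w.2
  have hFround : ∀ q ∈ F, q (j0 hd) ≤ pr (j0 hd) ∨ pr (j0 hd) + δ * xseq 0 ≤ q (j0 hd) := by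
    intro q hq
    rw [hF, Finset.mem_image] at hq
    obtain ⟨w, _, rfl⟩ := hq
    simp only [hρ]
    split_ifs with h
    · left; rw [Function.update_self]
    · rcases not_and_or.1 h with h1 | h2
      · left; linarith [not_lt.1 h1]
      · right; linarith [not_lt.1 h2]
  -- the attractor set
  set A : Set ↥(unitCube d) := {w : ↥(unitCube d) | ↑w ∈ Araw hd δ pr F} with hAdef
  have hAclosed : IsClosed A :=
    IsClosed.preimage continuous_subtype_val (Araw_closed hd δ pr hδ0 F)
  have hAcomp : IsCompact A := hAclosed.isCompact
  have hAne : A.Nonempty := ⟨⟨pr, hprcube⟩, Or.inr (Or.inl rfl)⟩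
  set AC : NonemptyCompacts ↥(unitCube d) := ⟨⟨A, hAcomp⟩, hAne⟩ with hAC
  have hACcoe : (AC : Set ↥(unitCube d)) = A := rfl
  refine ⟨AC, ?_, ?_⟩
  · -- distance bound
    rw [Metric.mem_ball, NonemptyCompacts.dist_eq, hACcoe]
    have hbound : hausdorffDist A K ≤ 2 * δ := by
      apply hausdorffDist_le_of_mem_dist (by linarith)
      · -- from A to K
        intro w hw
        rcases hw with hwF | hwp | ⟨n, hn⟩
        · rw [hF] at hwF
          have hwF' : (w : Fin d → ℝ) ∈ hnetfin.toFinset.image ρ := hwF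
          rw [Finset.mem_image] at hwF'
          obtain ⟨q, hqnet, hqe⟩ := hwF'
          refine ⟨q, hnetK (hnetfin.mem_toFinset.1 hqnet), ?_⟩
          rw [Subtype.dist_eq, ← hqe]
          calc dist (ρ q) (q : Fin d → ℝ) ≤ δ := hρdist q
          _ ≤ 2 * δ := by linarith
        · refine ⟨p0, hp0K, ?_⟩
          rw [Subtype.dist_eq]
          rw [Set.mem_singleton_iff] at hwp
          rw [hwp]
          calc dist pr (p0 : Fin d → ℝ) ≤ δ := hdist_pr_p0
          _ ≤ 2 * δ := by linarith
        · refine ⟨p0, hp0K, ?_⟩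
          rw [Subtype.dist_eq, ← hn]
          calc dist (yraw hd δ pr n) (p0 : Fin d → ℝ)
              ≤ dist (yraw hd δ pr n) pr + dist pr (p0 : Fin d → ℝ) := dist_triangle _ _ _
          _ ≤ δ * xseq n + δ := by
                rw [dist_yraw_p hd δ pr hδ0 n]
                linarith [hdist_pr_p0]
          _ ≤ 2 * δ := by nlinarith [xseq_pos n, xseq_lt_one n]
      · -- from K to A
        intro y hy
        obtain ⟨q, hqnet, hyq⟩ := Set.mem_iUnion₂.1 (hnetcov hy)
        have hρqF : ρ q ∈ F := by
          rw [hF, Finset.mem_image]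
          exact ⟨q, hnetfin.mem_toFinset.2 hqnet, rfl⟩
        refine ⟨⟨ρ q, hFc _ hρqF⟩, Or.inl hρqF, ?_⟩
        rw [Subtype.dist_eq]
        calc dist (y : Fin d → ℝ) (ρ q)
            ≤ dist (y : Fin d → ℝ) (q : Fin d → ℝ) + dist (q : Fin d → ℝ) (ρ q) :=
              dist_triangle _ _ _
        _ ≤ δ + δ := by
              have h1 : dist (y : Fin d → ℝ) (q : Fin d → ℝ) < δ := by
                rw [← Subtype.dist_eq]; exact Metric.mem_ball.1 hyq
              have h2 := hρdist q
              rw [dist_comm] at h2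
              linarith
        _ = 2 * δ := by ring
    calc hausdorffDist A K ≤ 2 * δ := hbound
    _ < r := by linarith
  · -- membership in the good set
    constructor
    · rw [hACcoe]
      exact weak_attractor hd δ pr hδ0 hprcube hpr1 F hFc hFround
    · rw [hACcoe]
      exact not_attractor hd δ pr hδ0 hprcube hpr1 F
end
end

section
/- For every d ∈ ℕ, the collection of all finite nonempty subsets of [0,1]^d is a σ-strongly porous subset of the hyperspace K([0,1]^d) of nonempty compact subsets of [0,1]^d with the Hausdorff metric. -/
open Metric Set Filter Topology TopologicalSpace

namespace FinPorAux

variable {d : ℕ}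

lemma mem_unitCube {z : Fin d → ℝ} : z ∈ unitCube d ↔ ∀ i, 0 ≤ z i ∧ z i ≤ 1 := by
  simp [unitCube, Set.mem_pi, Pi.le_def, forall_and]

def corners (d : ℕ) : Set (unitCube d) :=
  {p | ∀ i, (p : Fin d → ℝ) i = 0 ∨ (p : Fin d → ℝ) i = 1}

def goodSets (d : ℕ) (ε : ℝ) : Set (NonemptyCompacts (unitCube d)) :=
  {A | (A : Set (unitCube d)).Finite ∧
    (∀ a ∈ (A : Set (unitCube d)), ∀ b ∈ (A : Set (unitCube d)), a ≠ b → ε ≤ dist a b) ∧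
    (∀ p ∈ (A : Set (unitCube d)), p ∈ corners d ∨ ε ≤ infDist p (corners d))}

lemma exists_close (A C : NonemptyCompacts (unitCube d)) {r : ℝ} (h : dist A C ≤ r)
    {c : unitCube d} (hc : c ∈ (C : Set (unitCube d))) :
    ∃ a ∈ (A : Set (unitCube d)), dist c a ≤ r := by
  have hne : EMetric.hausdorffEdist (C : Set (unitCube d)) (A : Set (unitCube d)) ≠ ⊤ :=
    Metric.hausdorffEdist_ne_top_of_nonempty_of_bounded C.nonempty A.nonempty
      C.isCompact.isBounded A.isCompact.isBounded
  have h1 : infDist c (A : Set (unitCube d)) ≤ r := by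
    calc infDist c (A : Set (unitCube d))
        ≤ hausdorffDist (C : Set (unitCube d)) (A : Set (unitCube d)) :=
          infDist_le_hausdorffDist_of_mem hc hne
      _ = dist C A := NonemptyCompacts.dist_eq.symm
      _ = dist A C := dist_comm _ _
      _ ≤ r := h
  obtain ⟨a, ha, hda⟩ := A.isCompact.exists_infDist_eq_dist A.nonempty c
  exact ⟨a, ha, by rw [← hda]; exact h1⟩

lemma pair_avoid {C : NonemptyCompacts (unitCube d)} {u v : unitCube d}
    (hu : u ∈ (C : Set (unitCube d))) (hv : v ∈ (C : Set (unitCube d))) {δ r ε : ℝ}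
    (huv1 : 2*δ ≤ dist u v) (huv2 : dist u v ≤ 2*δ)
    (hr0 : 0 ≤ r) (hrδ : r < δ) (hδε : 4*δ ≤ ε) :
    closedBall C r ∩ goodSets d ε = ∅ := by
  ext A
  simp only [mem_inter_iff, Metric.mem_closedBall, mem_empty_iff_false, iff_false, not_and]
  rintro hA ⟨hfin, hgap, -⟩
  obtain ⟨a, ha, hau⟩ := exists_close A C hA hu
  obtain ⟨b, hb, hbv⟩ := exists_close A C hA hv
  have hau' : dist a u ≤ r := by rw [dist_comm]; exact hau
  have hbv' : dist b v ≤ r := by rw [dist_comm]; exact hbv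
  have htri : dist a b ≤ dist a u + dist u v + dist v b := dist_triangle4 a u v b
  have hvb : dist v b ≤ r := hbv
  have hne : a ≠ b := by
    intro h; subst h
    have h2 : dist u v ≤ dist u a + dist a v := dist_triangle u a v
    have h3 : dist a v ≤ r := by rw [dist_comm]; exact hbv
    linarith
  have h1 : ε ≤ dist a b := hgap a ha b hb hne
  linarith

lemma corner_avoid {C : NonemptyCompacts (unitCube d)} {q x : unitCube d}
    (hq : q ∈ (C : Set (unitCube d))) (hx : x ∈ corners d) {δ r ε : ℝ}
    (hqx : dist q x ≤ δ) (hqc : ∀ p ∈ corners d, δ ≤ dist q p)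
    (hr0 : 0 ≤ r) (hrδ : r < δ) (hδε : 2*δ ≤ ε) :
    closedBall C r ∩ goodSets d ε = ∅ := by
  ext A
  simp only [mem_inter_iff, Metric.mem_closedBall, mem_empty_iff_false, iff_false, not_and]
  rintro hA ⟨hfin, -, hcor⟩
  obtain ⟨w, hw, hqw⟩ := exists_close A C hA hq
  have hwnc : w ∉ corners d := by
    intro hwc
    have h1 : δ ≤ dist q w := hqc w hwc
    linarith
  have hlt : infDist w (corners d) < ε := by
    have h1 : infDist w (corners d) ≤ dist w x := infDist_le_dist_of_mem hx
    have h2 : dist w x ≤ dist w q + dist q x := dist_triangle w q x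
    have h3 : dist w q ≤ r := by rw [dist_comm]; exact hqw
    linarith
  rcases hcor w hw with h | h
  · exact hwnc h
  · linarith

lemma dist_update (x : Fin d → ℝ) (i : Fin d) (s t : ℝ) :
    dist (Function.update x i s) (Function.update x i t) = dist s t := by
  apply le_antisymm
  · rw [dist_pi_le_iff dist_nonneg]
    intro j
    rcases eq_or_ne j i with rfl | h
    · simp
    · simp [Function.update_of_ne h, dist_nonneg]
  · simpa using dist_le_pi_dist (Function.update x i s) (Function.update x i t) i

lemma dist_update_self (x : Fin d → ℝ) (i : Fin d) (t : ℝ) :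
    dist (Function.update x i t) x = dist t (x i) := by
  have h := dist_update x i t (x i)
  rwa [Function.update_eq_self] at h

lemma near (K : NonemptyCompacts (unitCube d)) (hK : (K : Set (unitCube d)) ≠ univ)
    {δ : ℝ} (hδ : 0 < δ) :
    ∃ w, w ∉ (K : Set (unitCube d)) ∧ ∃ p ∈ (K : Set (unitCube d)), dist w p ≤ δ := by
  by_contra h
  push_neg at h
  haveI : PreconnectedSpace (unitCube d) :=
    Subtype.preconnectedSpace ((convex_pi (fun _ _ => convex_Icc (0:ℝ) 1)).isPreconnected)
  have hopen : IsOpen (K : Set (unitCube d)) := by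
    rw [Metric.isOpen_iff]
    intro y hy
    refine ⟨δ, hδ, fun z hz => ?_⟩
    by_contra hzK
    have := h z hzK y hy
    rw [Metric.mem_ball] at hz
    linarith
  exact hK ((IsClopen.eq_univ ⟨K.isCompact.isClosed, hopen⟩ K.nonempty))

lemma wrap {S : Set (NonemptyCompacts (unitCube d))} (K : NonemptyCompacts (unitCube d))
    {δ₀ : ℝ} (hδ₀ : 0 < δ₀)
    (H : ∀ δ : ℝ, 0 < δ → δ ≤ δ₀ → ∃ C, dist K C ≤ δ ∧ K ≠ C ∧
      ∀ r : ℝ, 0 ≤ r → r < δ → closedBall C r ∩ S = ∅) :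
    ∃ (c : ℕ → NonemptyCompacts (unitCube d)) (r : ℕ → ℝ),
      (∀ n, 0 < r n) ∧ Tendsto c atTop (𝓝 K) ∧
      Tendsto (fun n => r n / dist K (c n)) atTop (𝓝 1) ∧
      ∀ n, closedBall (c n) (r n) ∩ S = ∅ := by
  have hδn : ∀ n : ℕ, 0 < δ₀ / (n+1) := fun n => by positivity
  have hδle : ∀ n : ℕ, δ₀ / (n+1) ≤ δ₀ := fun n => by
    rw [div_le_iff₀ (by positivity)]
    nlinarith [Nat.cast_nonneg (α := ℝ) n, hδ₀]
  choose C hC1 hC2 hC3 using fun n : ℕ => H (δ₀/(n+1)) (hδn n) (hδle n)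
  have hdpos : ∀ n, 0 < dist K (C n) := fun n => dist_pos.mpr (hC2 n)
  have hfac : ∀ n : ℕ, 0 < 1 - 1/((n:ℝ)+2) := fun n => by
    have : (1:ℝ)/((n:ℝ)+2) < 1 := by
      rw [div_lt_one (by positivity)]; linarith [Nat.cast_nonneg (α := ℝ) n]
    linarith
  refine ⟨C, fun n => (1 - 1/((n:ℝ)+2)) * dist K (C n),
    fun n => mul_pos (hfac n) (hdpos n), ?_, ?_, ?_⟩
  · rw [tendsto_iff_dist_tendsto_zero]
    have h0 : Tendsto (fun n : ℕ => δ₀ / ((n:ℝ)+1)) atTop (𝓝 0) := by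
      have h := Tendsto.const_mul δ₀ tendsto_one_div_add_atTop_nhds_zero_nat
      simpa [mul_one_div, div_eq_mul_inv] using h
    exact squeeze_zero (fun n => dist_nonneg) (fun n => by rw [dist_comm]; exact hC1 n) h0
  · have heq : (fun n : ℕ => (1 - 1/((n:ℝ)+2)) * dist K (C n) / dist K (C n))
        = fun n : ℕ => 1 - 1/((n:ℝ)+2) := by
      funext n
      rw [mul_div_assoc, div_self (hdpos n).ne', mul_one]
    rw [heq]
    have h2 : Tendsto (fun n : ℕ => 1/((n:ℝ)+2)) atTop (𝓝 0) :=
      squeeze_zero (f := fun n : ℕ => 1/((n:ℝ)+2)) (g := fun n : ℕ => 1/((n:ℝ)+1))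
        (fun n => by positivity) (fun n =>
          one_div_le_one_div_of_le (by positivity) (by linarith [Nat.cast_nonneg (α := ℝ) n]))
        tendsto_one_div_add_atTop_nhds_zero_nat
    simpa using tendsto_const_nhds.sub h2
  · intro n
    refine hC3 n _ (mul_pos (hfac n) (hdpos n)).le ?_
    calc (1 - 1/((n:ℝ)+2)) * dist K (C n) ≤ (1 - 1/((n:ℝ)+2)) * (δ₀/(n+1)) := by
          apply mul_le_mul_of_nonneg_left (hC1 n) (hfac n).le
      _ < 1 * (δ₀/(n+1)) := by
          apply mul_lt_mul_of_pos_right _ (hδn n)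
          have : (0:ℝ) < 1/((n:ℝ)+2) := by positivity
          linarith
      _ = δ₀/(n+1) := one_mul _

lemma case1 (hd : 1 ≤ d) {ε : ℝ} (hε : 0 < ε) (K : NonemptyCompacts (unitCube d))
    (hK : (K : Set (unitCube d)) ⊆ corners d) :
    ∃ δ₀ > 0, ∀ δ : ℝ, 0 < δ → δ ≤ δ₀ → ∃ C, dist K C ≤ δ ∧ K ≠ C ∧
      ∀ r : ℝ, 0 ≤ r → r < δ → closedBall C r ∩ goodSets d ε = ∅ := by
  classical
  obtain ⟨x, hx⟩ := K.nonempty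
  have hxc : x ∈ corners d := hK hx
  refine ⟨min (1/2) (ε/2), by positivity, fun δ hδ hδ₀ => ?_⟩
  have hδ2 : δ ≤ 1/2 := le_trans hδ₀ (min_le_left _ _)
  have hδε : 2*δ ≤ ε := by
    have := le_trans hδ₀ (min_le_right _ _); linarith
  have hqmem : (fun j => if (x : Fin d → ℝ) j = 0 then δ else 1 - δ) ∈ unitCube d := by
    rw [mem_unitCube]; intro i
    show 0 ≤ (if (x : Fin d → ℝ) i = 0 then δ else 1 - δ) ∧
      (if (x : Fin d → ℝ) i = 0 then δ else 1 - δ) ≤ 1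
    split <;> constructor <;> linarith
  set q : unitCube d := ⟨fun j => if (x : Fin d → ℝ) j = 0 then δ else 1 - δ, hqmem⟩ with hqdef
  have hqval : ∀ j, (q : Fin d → ℝ) j = δ ∨ (q : Fin d → ℝ) j = 1 - δ := by
    intro j; by_cases h0 : (x : Fin d → ℝ) j = 0
    · left; simp [hqdef, h0]
    · right; simp [hqdef, h0]
  have key : ∀ a b : ℝ, (a = δ ∨ a = 1 - δ) → (b = 0 ∨ b = 1) → δ ≤ |a - b| := by
    rintro a b (rfl | rfl) (rfl | rfl) <;> rw [le_abs] <;>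
      first
        | (left; linarith)
        | (right; linarith)
  have hqx : dist q x ≤ δ := by
    rw [Subtype.dist_eq, dist_pi_le_iff hδ.le]
    intro j
    rcases hxc j with h | h
    · have h0 : (q : Fin d → ℝ) j = δ := by simp [hqdef, h]
      rw [Real.dist_eq, h0, h]
      rw [abs_of_nonneg (by linarith)]
      linarith
    · have h0 : (x : Fin d → ℝ) j ≠ 0 := by rw [h]; norm_num
      have h1 : (q : Fin d → ℝ) j = 1 - δ := by simp [hqdef, h0]
      rw [Real.dist_eq, h1, h, abs_of_nonpos (by linarith)]
      linarith
  have hqc : ∀ p ∈ corners d, δ ≤ dist q p := by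
    intro p hp
    have i0 : Fin d := ⟨0, hd⟩
    calc δ ≤ dist ((q : Fin d → ℝ) i0) ((p : Fin d → ℝ) i0) := by
          rw [Real.dist_eq]; exact key _ _ (hqval i0) (hp i0)
      _ ≤ dist (q : Fin d → ℝ) (p : Fin d → ℝ) := dist_le_pi_dist _ _ i0
      _ = dist q p := (Subtype.dist_eq q p).symm
  have hqK : q ∉ (K : Set (unitCube d)) := by
    intro hq
    have := hqc q (hK hq)
    simp only [dist_self] at this
    linarith
  refine ⟨⟨⟨(K : Set (unitCube d)) ∪ {q}, K.isCompact.union isCompact_singleton⟩,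
      ⟨x, Or.inl hx⟩⟩, ?_, ?_, ?_⟩
  · rw [NonemptyCompacts.dist_eq]
    apply hausdorffDist_le_of_mem_dist hδ.le
    · intro p hp; exact ⟨p, Or.inl hp, by rw [dist_self]; exact hδ.le⟩
    · rintro c (hc | hc)
      · exact ⟨c, hc, by rw [dist_self]; exact hδ.le⟩
      · rw [mem_singleton_iff] at hc; subst hc
        exact ⟨x, hx, hqx⟩
  · intro h
    apply hqK
    have : q ∈ ((⟨⟨(K : Set (unitCube d)) ∪ {q}, K.isCompact.union isCompact_singleton⟩,
        ⟨x, Or.inl hx⟩⟩ : NonemptyCompacts (unitCube d)) : Set (unitCube d)) := Or.inr rfl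
    rw [← h] at this
    exact this
  · intro r hr0 hrδ
    exact corner_avoid (Or.inr rfl) hxc hqx hqc hr0 hrδ hδε

lemma case2 {ε : ℝ} (hε : 0 < ε) (K : NonemptyCompacts (unitCube d))
    (hK1 : ¬ (K : Set (unitCube d)) ⊆ corners d) (hK2 : (K : Set (unitCube d)) ≠ univ) :
    ∃ δ₀ > 0, ∀ δ : ℝ, 0 < δ → δ ≤ δ₀ → ∃ C, dist K C ≤ δ ∧ K ≠ C ∧
      ∀ r : ℝ, 0 ≤ r → r < δ → closedBall C r ∩ goodSets d ε = ∅ := by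
  classical
  obtain ⟨x, hx, hxnc⟩ := not_subset.mp hK1
  have hxi : ∃ i, (x : Fin d → ℝ) i ≠ 0 ∧ (x : Fin d → ℝ) i ≠ 1 := by
    by_contra h
    push_neg at h
    exact hxnc fun i => by
      rcases eq_or_ne ((x : Fin d → ℝ) i) 0 with h0 | h0
      · exact Or.inl h0
      · exact Or.inr (h i h0)
  obtain ⟨i, hi0, hi1⟩ := hxi
  have hxmem := mem_unitCube.mp x.2 i
  have hlt0 : 0 < (x : Fin d → ℝ) i := lt_of_le_of_ne hxmem.1 (Ne.symm hi0)
  have hlt1 : (x : Fin d → ℝ) i < 1 := lt_of_le_of_ne hxmem.2 hi1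
  refine ⟨min (min ((x : Fin d → ℝ) i) (1 - (x : Fin d → ℝ) i)) (ε/4), by
    have : (0:ℝ) < min ((x : Fin d → ℝ) i) (1 - (x : Fin d → ℝ) i) := lt_min hlt0 (by linarith)
    positivity, fun δ hδ hδ₀ => ?_⟩
  have hδx : δ ≤ (x : Fin d → ℝ) i :=
    le_trans hδ₀ (le_trans (min_le_left _ _) (min_le_left _ _))
  have hδx' : δ ≤ 1 - (x : Fin d → ℝ) i :=
    le_trans hδ₀ (le_trans (min_le_left _ _) (min_le_right _ _))
  have hδε : 4*δ ≤ ε := by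
    have := le_trans hδ₀ (min_le_right _ _); linarith
  have humem : Function.update (x : Fin d → ℝ) i ((x : Fin d → ℝ) i - δ) ∈ unitCube d := by
    rw [mem_unitCube]; intro j
    rcases eq_or_ne j i with rfl | h
    · rw [Function.update_self]; constructor <;> linarith
    · rw [Function.update_of_ne h]; exact mem_unitCube.mp x.2 j
  have hvmem : Function.update (x : Fin d → ℝ) i ((x : Fin d → ℝ) i + δ) ∈ unitCube d := by
    rw [mem_unitCube]; intro j
    rcases eq_or_ne j i with rfl | h
    · rw [Function.update_self]; constructor <;> linarith
    · rw [Function.update_of_ne h]; exact mem_unitCube.mp x.2 j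
  set u : unitCube d := ⟨_, humem⟩ with hudef
  set v : unitCube d := ⟨_, hvmem⟩ with hvdef
  have huv : dist u v = 2*δ := by
    rw [Subtype.dist_eq, hudef, hvdef]
    show dist (Function.update _ _ _) (Function.update _ _ _) = 2*δ
    rw [dist_update, Real.dist_eq, abs_of_nonpos (by linarith)]
    ring
  have hux : dist u x ≤ δ := by
    rw [Subtype.dist_eq, hudef]
    show dist (Function.update _ _ _) _ ≤ δ
    rw [dist_update_self, Real.dist_eq, abs_of_nonpos (by linarith)]
    linarith
  have hvx : dist v x ≤ δ := by
    rw [Subtype.dist_eq, hvdef]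
    show dist (Function.update _ _ _) _ ≤ δ
    rw [dist_update_self, Real.dist_eq, abs_of_nonneg (by linarith)]
    linarith
  obtain ⟨w, hwK, p, hp, hwp⟩ := near K hK2 hδ
  refine ⟨⟨⟨(K : Set (unitCube d)) ∪ {u, v, w},
      K.isCompact.union (Set.Finite.isCompact (by
        exact (Set.finite_singleton w).insert v |>.insert u))⟩,
      ⟨x, Or.inl hx⟩⟩, ?_, ?_, ?_⟩
  · rw [NonemptyCompacts.dist_eq]
    apply hausdorffDist_le_of_mem_dist hδ.le
    · intro a ha; exact ⟨a, Or.inl ha, by rw [dist_self]; exact hδ.le⟩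
    · rintro c (hc | hc)
      · exact ⟨c, hc, by rw [dist_self]; exact hδ.le⟩
      · rcases hc with hc | hc | hc
        · subst hc; exact ⟨x, hx, hux⟩
        · subst hc; exact ⟨x, hx, hvx⟩
        · rw [mem_singleton_iff] at hc; subst hc; exact ⟨p, hp, hwp⟩
  · intro h
    apply hwK
    rw [h]
    exact Or.inr (Or.inr (Or.inr rfl))
  · intro r hr0 hrδ
    exact pair_avoid (Or.inr (Or.inl rfl)) (Or.inr (Or.inr (Or.inl rfl)))
      huv.ge huv.le hr0 hrδ hδε

lemma case3 (hd : 1 ≤ d) {ε : ℝ} (hε : 0 < ε) (K : NonemptyCompacts (unitCube d))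
    (hK : (K : Set (unitCube d)) = univ) :
    ∃ δ₀ > 0, ∀ δ : ℝ, 0 < δ → δ ≤ δ₀ → ∃ C, dist K C ≤ δ ∧ K ≠ C ∧
      ∀ r : ℝ, 0 ≤ r → r < δ → closedBall C r ∩ goodSets d ε = ∅ := by
  classical
  haveI : CompactSpace (unitCube d) :=
    isCompact_iff_compactSpace.mp (isCompact_univ_pi fun _ => isCompact_Icc)
  have hx₀mem : (fun _ : Fin d => (1:ℝ)/2) ∈ unitCube d := by
    rw [mem_unitCube]; intro i; norm_num
  set x₀ : unitCube d := ⟨fun _ => 1/2, hx₀mem⟩ with hx₀def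
  have i0 : Fin d := ⟨0, hd⟩
  refine ⟨min (1/2) (ε/4), by positivity, fun δ hδ hδ₀ => ?_⟩
  have hδ2 : δ ≤ 1/2 := le_trans hδ₀ (min_le_left _ _)
  have hδε : 4*δ ≤ ε := by
    have := le_trans hδ₀ (min_le_right _ _); linarith
  set Ccar : Set (unitCube d) := {z | δ ≤ dist z x₀} with hCcar
  have hCclosed : IsClosed Ccar :=
    isClosed_le continuous_const (Continuous.dist continuous_id continuous_const)
  have humem : Function.update (x₀ : Fin d → ℝ) i0 (1/2 - δ) ∈ unitCube d := by
    rw [mem_unitCube]; intro j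
    rcases eq_or_ne j i0 with rfl | h
    · rw [Function.update_self]; constructor <;> linarith
    · rw [Function.update_of_ne h]; exact mem_unitCube.mp x₀.2 j
  have hvmem : Function.update (x₀ : Fin d → ℝ) i0 (1/2 + δ) ∈ unitCube d := by
    rw [mem_unitCube]; intro j
    rcases eq_or_ne j i0 with rfl | h
    · rw [Function.update_self]; constructor <;> linarith
    · rw [Function.update_of_ne h]; exact mem_unitCube.mp x₀.2 j
  set u : unitCube d := ⟨_, humem⟩ with hudef
  set v : unitCube d := ⟨_, hvmem⟩ with hvdef
  have hux₀ : dist u x₀ = δ := by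
    rw [Subtype.dist_eq, hudef]
    show dist (Function.update _ _ _) _ = δ
    rw [dist_update_self]
    show dist (1/2 - δ) (1/2) = δ
    rw [Real.dist_eq, abs_of_nonpos (by linarith)]
    ring
  have hvx₀ : dist v x₀ = δ := by
    rw [Subtype.dist_eq, hvdef]
    show dist (Function.update _ _ _) _ = δ
    rw [dist_update_self]
    show dist (1/2 + δ) (1/2) = δ
    rw [Real.dist_eq, abs_of_nonneg (by linarith)]
    ring
  have huC : u ∈ Ccar := hux₀.ge
  have hvC : v ∈ Ccar := hvx₀.ge
  have huv : dist u v = 2*δ := by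
    rw [Subtype.dist_eq, hudef, hvdef]
    show dist (Function.update _ _ _) (Function.update _ _ _) = 2*δ
    rw [dist_update, Real.dist_eq, abs_of_nonpos (by linarith)]
    ring
  refine ⟨⟨⟨Ccar, hCclosed.isCompact⟩, ⟨u, huC⟩⟩, ?_, ?_, ?_⟩
  · rw [NonemptyCompacts.dist_eq]
    apply hausdorffDist_le_of_mem_dist hδ.le
    · intro a _
      rcases le_or_gt δ (dist a x₀) with h | h
      · exact ⟨a, h, by rw [dist_self]; exact hδ.le⟩
      · set t : ℝ := if (a : Fin d → ℝ) i0 ≤ 1/2 then 1/2 - δ else 1/2 + δ with ht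
        have htmem : Function.update (a : Fin d → ℝ) i0 t ∈ unitCube d := by
          rw [mem_unitCube]; intro j
          rcases eq_or_ne j i0 with rfl | hj
          · rw [Function.update_self, ht]
            split <;> constructor <;> linarith
          · rw [Function.update_of_ne hj]; exact mem_unitCube.mp a.2 j
        set c : unitCube d := ⟨_, htmem⟩ with hcdef
        have hai0 : |(a : Fin d → ℝ) i0 - 1/2| < δ := by
          have h1 : dist ((a : Fin d → ℝ) i0) ((x₀ : Fin d → ℝ) i0) ≤ dist a x₀ := by
            rw [Subtype.dist_eq]; exact dist_le_pi_dist _ _ i0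
          rw [Real.dist_eq] at h1
          exact lt_of_le_of_lt h1 h
        have hct : |t - 1/2| = δ := by
          rw [ht]; split
          · rw [abs_of_nonpos (by linarith)]; ring
          · rw [abs_of_nonneg (by linarith)]; ring
        have hcC : c ∈ Ccar := by
          show δ ≤ dist c x₀
          calc δ = |t - 1/2| := hct.symm
            _ = dist ((c : Fin d → ℝ) i0) ((x₀ : Fin d → ℝ) i0) := by
                rw [Real.dist_eq, hcdef]
                show _ = |Function.update (a : Fin d → ℝ) i0 t i0 - 1/2|
                rw [Function.update_self]
            _ ≤ dist (c : Fin d → ℝ) (x₀ : Fin d → ℝ) := dist_le_pi_dist _ _ i0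
            _ = dist c x₀ := (Subtype.dist_eq c x₀).symm
        have hac : dist a c ≤ δ := by
          rw [Subtype.dist_eq, hcdef, dist_comm]
          show dist (Function.update _ _ _) _ ≤ δ
          rw [dist_update_self, Real.dist_eq]
          have := abs_lt.mp hai0
          rw [ht]; split <;> [rw [abs_of_nonpos (by linarith)]; rw [abs_of_nonneg (by linarith)]] <;>
            linarith
        exact ⟨c, hcC, hac⟩
    · intro c _
      exact ⟨c, by rw [hK]; trivial, by rw [dist_self]; exact hδ.le⟩
  · intro h
    have hx₀K : x₀ ∈ (K : Set (unitCube d)) := by rw [hK]; trivial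
    rw [h] at hx₀K
    have : δ ≤ dist x₀ x₀ := hx₀K
    rw [dist_self] at this
    linarith
  · intro r hr0 hrδ
    exact pair_avoid huC hvC huv.ge huv.le hr0 hrδ hδε

lemma isClosed_corners : IsClosed (corners d) := by
  have h : corners d = ⋂ i, ({p : unitCube d | (p : Fin d → ℝ) i = 0} ∪
      {p : unitCube d | (p : Fin d → ℝ) i = 1}) := by
    ext p; simp [corners, mem_iInter]
  rw [h]
  exact isClosed_iInter fun i =>
    IsClosed.union
      (isClosed_eq (Continuous.comp (continuous_apply i) continuous_subtype_val)
        continuous_const)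
      (isClosed_eq (Continuous.comp (continuous_apply i) continuous_subtype_val)
        continuous_const)

lemma corners_nonempty : (corners d).Nonempty :=
  ⟨⟨fun _ => 0, by rw [mem_unitCube]; intro i; norm_num⟩, fun i => Or.inl rfl⟩

lemma posLB {s : Set ℝ} (hs : s.Finite) (h : ∀ x ∈ s, 0 < x) : ∃ ε > 0, ∀ x ∈ s, ε ≤ x := by
  rcases s.eq_empty_or_nonempty with rfl | hne
  · exact ⟨1, one_pos, by simp⟩
  · obtain ⟨a, ha, hmin⟩ := Set.exists_min_image s id hs hne
    exact ⟨a, h a ha, hmin⟩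

lemma cover (hd : 1 ≤ d) {A : NonemptyCompacts (unitCube d)}
    (h : (A : Set (unitCube d)).Finite) :
    ∃ k : ℕ, A ∈ goodSets d (1/((k:ℝ)+1)) := by
  classical
  set D : Set ℝ := (fun pr : unitCube d × unitCube d => dist pr.1 pr.2) ''
      {pr | pr.1 ∈ (A : Set (unitCube d)) ∧ pr.2 ∈ (A : Set (unitCube d)) ∧ pr.1 ≠ pr.2}
    with hD
  set E : Set ℝ := (fun p : unitCube d => infDist p (corners d)) ''
      {p | p ∈ (A : Set (unitCube d)) ∧ p ∉ corners d} with hE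
  have hDfin : D.Finite :=
    Set.Finite.image _ ((h.prod h).subset (fun pr hpr => ⟨hpr.1, hpr.2.1⟩))
  have hEfin : E.Finite := Set.Finite.image _ (h.subset fun p hp => hp.1)
  have hpos : ∀ x ∈ D ∪ E, 0 < x := by
    rintro x (⟨⟨a, b⟩, ⟨ha, hb, hab⟩, rfl⟩ | ⟨p, ⟨hp, hpc⟩, rfl⟩)
    · exact dist_pos.mpr hab
    · exact (IsClosed.notMem_iff_infDist_pos isClosed_corners corners_nonempty).mp hpc
  obtain ⟨ε, hε, hlb⟩ := posLB (hDfin.union hEfin) hpos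
  obtain ⟨k, hk⟩ := exists_nat_one_div_lt hε
  refine ⟨k, h, ?_, ?_⟩
  · intro a ha b hb hab
    exact le_trans hk.le (hlb _ (Or.inl ⟨⟨a, b⟩, ⟨ha, hb, hab⟩, rfl⟩))
  · intro p hp
    by_cases hpc : p ∈ corners d
    · exact Or.inl hpc
    · exact Or.inr (le_trans hk.le (hlb _ (Or.inr ⟨p, ⟨hp, hpc⟩, rfl⟩)))

end FinPorAux

/-- For every `d ≥ 1`, the collection of all finite nonempty subsets of `[0,1]^d` is
σ-strongly porous in the hyperspace `K([0,1]^d)` of nonempty compact subsets of `[0,1]^d`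
with the Hausdorff metric. -/
theorem finiteSets_sigmaStronglyPorous (d : ℕ) (hd : 1 ≤ d) :
    SigmaStronglyPorous
      {A : NonemptyCompacts (unitCube d) | (A : Set (unitCube d)).Finite} := by
  classical
  refine ⟨fun k => FinPorAux.goodSets d (1/((k:ℝ)+1)), fun k => ?_, ?_⟩
  · intro K
    have hε : (0:ℝ) < 1/((k:ℝ)+1) := by positivity
    by_cases h1 : (K : Set (unitCube d)) ⊆ FinPorAux.corners d
    · obtain ⟨δ₀, hδ₀, H⟩ := FinPorAux.case1 hd hε K h1
      exact FinPorAux.wrap K hδ₀ H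
    · by_cases h2 : (K : Set (unitCube d)) = univ
      · obtain ⟨δ₀, hδ₀, H⟩ := FinPorAux.case3 hd hε K h2
        exact FinPorAux.wrap K hδ₀ H
      · obtain ⟨δ₀, hδ₀, H⟩ := FinPorAux.case2 hε K h1 h2
        exact FinPorAux.wrap K hδ₀ H
  · ext A
    simp only [mem_setOf_eq, mem_iUnion]
    constructor
    · intro h
      exact FinPorAux.cover hd h
    · rintro ⟨k, hk⟩
      exact hk.1
end

section
/- For every d ∈ ℕ and every nonempty compact set A ⊆ [0,1], A is a weak IFS attractor on [0,1] (A ∈ A_w[0,1]) if and only if A × {0}^{d−1} is a weak IFS attractor on [0,1]^d (A × {0}^{d−1} ∈ A_w[0,1]^d). -/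
open Metric Set

/-- `f` is a weak contraction of the set `S`: it maps `S` into `S` and strictly decreases
distances of distinct points of `S`. -/
def IsWeakContractionOn {X : Type*} [MetricSpace X] (f : X → X) (S : Set X) : Prop :=
  Set.MapsTo f S S ∧ ∀ x ∈ S, ∀ y ∈ S, x ≠ y → dist (f x) (f y) < dist x y

/-- `A` is an attractor of a weak iterated function system acting on `S`: it is a nonempty
compact subset of `S` which is the union of its images under finitely many weak
contractions of `S`. -/
def IsWeakIFSAttractorOn {X : Type*} [MetricSpace X] (A S : Set X) : Prop :=
  A.Nonempty ∧ IsCompact A ∧ A ⊆ S ∧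
    ∃ (n : ℕ) (f : Fin (n + 1) → X → X),
      (∀ i, IsWeakContractionOn (f i) S) ∧ A = ⋃ i, f i '' A

/-- For every `d ≥ 1` and every nonempty compact `A ⊆ [0,1]`: `A` is a weak IFS attractor
on `[0,1]` if and only if `A × {0}^{d-1} = {(a,0,…,0) : a ∈ A}` is a weak IFS attractor on
`[0,1]^d`. -/
theorem weakAttractor_iff_embedded_weakAttractor (d : ℕ) (hd : 1 ≤ d) (A : Set ℝ)
    (hne : A.Nonempty) (hcomp : IsCompact A) (hsub : A ⊆ Set.Icc 0 1) :
    IsWeakIFSAttractorOn A (Set.Icc 0 1) ↔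
      IsWeakIFSAttractorOn
        ((fun a => fun i : Fin d => if (i : ℕ) = 0 then a else 0) '' A)
        (unitCube d) := by
  classical
  set e : ℝ → (Fin d → ℝ) := fun a => fun i : Fin d => if (i : ℕ) = 0 then a else 0 with he
  set i0 : Fin d := ⟨0, hd⟩ with hi0
  have he0 : ∀ a, e a i0 = a := fun a => if_pos rfl
  have hdist : ∀ a b, dist (e a) (e b) = dist a b := by
    intro a b
    apply le_antisymm
    · refine (dist_pi_le_iff dist_nonneg).2 fun i => ?_
      by_cases h : (i : ℕ) = 0
      · simp [he, h]
      · simp [he, h, dist_nonneg]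
    · simpa [he0] using dist_le_pi_dist (e a) (e b) i0
  have hmem : ∀ a ∈ Set.Icc (0:ℝ) 1, e a ∈ unitCube d := by
    intro a ha i _
    by_cases h : (i : ℕ) = 0 <;> simp [he, h, ha, ha.1, ha.2]
  have hcont : Continuous e := by
    refine continuous_pi fun i => ?_
    by_cases h : (i : ℕ) = 0
    · exact continuous_id.congr (fun a => by simp [he, h])
    · simpa [he, h] using continuous_const (y := (0:ℝ))
  constructor
  · rintro ⟨-, -, -, n, f, hf, hA⟩
    refine ⟨hne.image e, hcomp.image hcont, ?_, n, fun i x => e (f i (x i0)), ?_, ?_⟩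
    · rintro _ ⟨a, ha, rfl⟩
      exact hmem a (hsub ha)
    · intro i
      refine ⟨fun x hx => hmem _ ((hf i).1 (hx i0 trivial)), ?_⟩
      intro x hx y hy hxy
      rw [hdist]
      by_cases h : x i0 = y i0
      · calc dist (f i (x i0)) (f i (y i0)) = 0 := by rw [h]; simp
          _ < dist x y := dist_pos.mpr hxy
      · calc dist (f i (x i0)) (f i (y i0)) < dist (x i0) (y i0) :=
              (hf i).2 _ (hx i0 trivial) _ (hy i0 trivial) h
          _ ≤ dist x y := dist_le_pi_dist x y i0
    · have : ∀ i, (fun x => e (f i (x i0))) '' (e '' A) = e '' (f i '' A) := by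
        intro i
        rw [Set.image_image, Set.image_image]
        simp [he0]
      simp only [this]
      rw [← Set.image_iUnion, ← hA]
  · rintro ⟨-, -, -, n, g, hg, hA⟩
    refine ⟨hne, hcomp, hsub, n, fun i a => g i (e a) i0, ?_, ?_⟩
    · intro i
      refine ⟨fun a ha => (hg i).1 (hmem a ha) i0 trivial, ?_⟩
      intro x hx y hy hxy
      calc dist (g i (e x) i0) (g i (e y) i0) ≤ dist (g i (e x)) (g i (e y)) :=
            dist_le_pi_dist _ _ i0
        _ < dist (e x) (e y) := (hg i).2 _ (hmem x hx) _ (hmem y hy)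
            (fun h => hxy (by simpa [he0] using congrFun h i0))
        _ = dist x y := hdist x y
    · have key : (fun x : Fin d → ℝ => x i0) '' (e '' A) = A := by
        rw [Set.image_image]; simp [he0]
      have := congrArg (fun S => (fun x : Fin d → ℝ => x i0) '' S) hA
      simp only [key, Set.image_iUnion, Set.image_image] at this
      exact this
end

section
/- If A ⊆ [0,1]^d is a weak IFS attractor and F ⊆ [0,1]^d is a finite set, then A ∪ F is a weak IFS attractor on [0,1]^d. -/
open Metric Set

section Aux

variable {d : ℕ}

private lemma clamp_mem (x : Fin d → ℝ) :
    (fun i => max 0 (min (x i) 1)) ∈ unitCube d := by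
  intro i _
  exact ⟨le_max_left _ _, max_le (by norm_num) (min_le_right _ _)⟩

private lemma clamp_eq_self {x : Fin d → ℝ} (hx : x ∈ unitCube d) :
    (fun i => max 0 (min (x i) 1)) = x := by
  funext i
  have h := hx i (mem_univ i)
  rw [min_eq_left h.2, max_eq_right h.1]

private lemma clamp_lip (x y : Fin d → ℝ) :
    dist (fun i => max 0 (min (x i) 1)) (fun i => max 0 (min (y i) 1)) ≤ dist x y := by
  refine (dist_pi_le_iff dist_nonneg).2 fun i => ?_
  have h1 : dist (max 0 (min (x i) 1)) (max 0 (min (y i) 1)) ≤ dist (min (x i) 1) (min (y i) 1) := by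
    rw [Real.dist_eq, Real.dist_eq, max_comm 0 (min (x i) 1), max_comm 0 (min (y i) 1)]
    exact abs_max_sub_max_le_abs _ _ _
  have h2 : dist (min (x i) 1) (min (y i) 1) ≤ dist (x i) (y i) := by
    rw [Real.dist_eq, Real.dist_eq]
    simpa using abs_min_sub_min_le_max (x i) 1 (y i) 1
  exact (h1.trans h2).trans (dist_le_pi_dist x y i)

end Aux

set_option maxHeartbeats 2000000 in
/-- If `A ⊆ [0,1]^d` is a weak IFS attractor and `F ⊆ [0,1]^d` is finite, then `A ∪ F` is
a weak IFS attractor on `[0,1]^d`. -/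
theorem weakAttractor_union_finite (d : ℕ) (hd : 1 ≤ d) (A F : Set (Fin d → ℝ))
    (hA : IsWeakIFSAttractorOn A (unitCube d)) (hF : F.Finite)
    (hFsub : F ⊆ unitCube d) :
    IsWeakIFSAttractorOn (A ∪ F) (unitCube d) := by
  classical
  obtain ⟨hAne, hAcp, hAsub, n₀, f, hf, hAeq⟩ := hA
  set S := unitCube d with hS
  obtain ⟨z₀, hz₀⟩ := hAne
  -- basic facts about the maps
  have hmapS : ∀ i, Set.MapsTo (f i) S S := fun i => (hf i).1
  have hnexp : ∀ (i) (x y : (Fin d → ℝ)), x ∈ S → y ∈ S → dist (f i x) (f i y) ≤ dist x y := by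
    intro i x y hx hy
    rcases eq_or_ne x y with rfl | hxy
    · simp
    · exact le_of_lt ((hf i).2 x hx y hy hxy)
  have hmapA : ∀ i, Set.MapsTo (f i) A A := by
    intro i x hx
    have : f i x ∈ ⋃ j, f j '' A := mem_iUnion.2 ⟨i, mem_image_of_mem _ hx⟩
    rwa [← hAeq] at this
  -- words
  set wApp : List (Fin (n₀ + 1)) → (Fin d → ℝ) → (Fin d → ℝ) := fun l x => l.foldr (fun i y => f i y) x with hwApp
  have wApp_nil : ∀ x, wApp [] x = x := fun _ => rfl
  have wApp_cons : ∀ i l x, wApp (i :: l) x = f i (wApp l x) := fun _ _ _ => rfl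
  have listcons : ∀ (l : List (Fin (n₀ + 1))) (n : ℕ), l.length = n + 1 →
      ∃ i t, l = i :: t ∧ t.length = n := by
    intro l n hl
    cases l with
    | nil => simp at hl
    | cons i t => exact ⟨i, t, rfl, by simpa using hl⟩
  have hwA : ∀ l, Set.MapsTo (wApp l) A A := by
    intro l
    induction l with
    | nil => intro x hx; exact hx
    | cons i t ih => intro x hx; exact hmapA i (ih hx)
  have hwLip : ∀ (l) (x y : (Fin d → ℝ)), x ∈ A → y ∈ A →
      dist (wApp l x) (wApp l y) ≤ dist x y := by
    intro l
    induction l with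
    | nil => intro x y _ _; simp [wApp_nil]
    | cons i t ih =>
      intro x y hx hy
      calc dist (wApp (i :: t) x) (wApp (i :: t) y)
          = dist (f i (wApp t x)) (f i (wApp t y)) := by rw [wApp_cons, wApp_cons]
        _ ≤ dist (wApp t x) (wApp t y) :=
            hnexp i _ _ (hAsub (hwA t hx)) (hAsub (hwA t hy))
        _ ≤ dist x y := ih x y hx hy
  -- the sup of distances of images under length-n words
  set Sn : ℕ → Set ℝ := fun n =>
    {r | ∃ l x y, l.length = n ∧ x ∈ A ∧ y ∈ A ∧ r = dist (wApp l x) (wApp l y)} with hSn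
  have hSne : ∀ n, (Sn n).Nonempty := by
    intro n
    exact ⟨_, List.replicate n 0, z₀, z₀, List.length_replicate, hz₀, hz₀, rfl⟩
  have hSbdd : ∀ n, BddAbove (Sn n) := by
    intro n
    refine ⟨diam A, fun r hr => ?_⟩
    obtain ⟨l, x, y, _, hx, hy, rfl⟩ := hr
    exact (hwLip l x y hx hy).trans (dist_le_diam_of_mem hAcp.isBounded hx hy)
  set u : ℕ → ℝ := fun n => sSup (Sn n) with hu
  have hmem_le : ∀ n r, r ∈ Sn n → r ≤ u n := fun n r hr => le_csSup (hSbdd n) hr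
  have hu0 : ∀ n, 0 ≤ u n := by
    intro n
    have : (0 : ℝ) ∈ Sn n :=
      ⟨List.replicate n 0, z₀, z₀, List.length_replicate, hz₀, hz₀, by simp⟩
    exact hmem_le n 0 this
  have huanti : Antitone u := by
    refine antitone_nat_of_succ_le fun n => ?_
    refine csSup_le (hSne (n + 1)) fun r hr => ?_
    obtain ⟨l, x, y, hl, hx, hy, rfl⟩ := hr
    obtain ⟨i, t, rfl, ht⟩ := listcons l n hl
    · calc dist (wApp (i :: t) x) (wApp (i :: t) y)
          = dist (f i (wApp t x)) (f i (wApp t y)) := by rw [wApp_cons, wApp_cons]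
        _ ≤ dist (wApp t x) (wApp t y) :=
            hnexp i _ _ (hAsub (hwA t hx)) (hAsub (hwA t hy))
        _ ≤ u n := hmem_le n _ ⟨t, x, y, ht, hx, hy, rfl⟩
  -- key: u n gets arbitrarily small
  have hukey : ∀ δ : ℝ, 0 < δ → ∃ N, u N < δ := by
    intro δ hδ
    by_contra hcon
    push_neg at hcon
    have hδu : ∀ n, δ ≤ u n := hcon
    have hbdd : BddBelow (Set.range u) := ⟨0, by rintro r ⟨n, rfl⟩; exact hu0 n⟩
    set L : ℝ := ⨅ n, u n with hL
    have htend : Filter.Tendsto u Filter.atTop (nhds L) := tendsto_atTop_ciInf huanti hbdd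
    have hLδ : δ ≤ L := le_ciInf hδu
    -- approximate maximizers
    have happrox : ∀ n : ℕ, ∃ (l : List (Fin (n₀ + 1))) (x y : Fin d → ℝ), l.length = n + 1 ∧ x ∈ A ∧ y ∈ A ∧
        u (n + 1) - 1 / (n + 1) < dist (wApp l x) (wApp l y) := by
      intro n
      have h1 : u (n + 1) - 1 / (n + 1) < sSup (Sn (n + 1)) := by
        have : (0 : ℝ) < 1 / (n + 1) := by positivity
        simpa [hu] using sub_lt_self (u (n + 1)) this
      obtain ⟨r, hr, hlt⟩ := exists_lt_of_lt_csSup (hSne (n + 1)) h1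
      obtain ⟨l, x, y, hl, hx, hy, rfl⟩ := hr
      exact ⟨l, x, y, hl, hx, hy, hlt⟩
    choose l x y hlen hxA hyA hval using happrox
    have hcons : ∀ n, ∃ i t, l n = i :: t ∧ t.length = n := by
      intro n
      exact listcons (l n) n (hlen n)
    choose hd' tl htl htlen using hcons
    set a : ℕ → (Fin d → ℝ) := fun n => wApp (tl n) (x n) with ha
    set b : ℕ → (Fin d → ℝ) := fun n => wApp (tl n) (y n) with hb
    have haA : ∀ n, a n ∈ A := fun n => hwA _ (hxA n)
    have hbA : ∀ n, b n ∈ A := fun n => hwA _ (hyA n)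
    have hvals : ∀ n, u (n + 1) - 1 / (n + 1) < dist (f (hd' n) (a n)) (f (hd' n) (b n)) := by
      intro n
      have := hval n
      rwa [htl n, wApp_cons, wApp_cons] at this
    have hvals' : ∀ n, dist (f (hd' n) (a n)) (f (hd' n) (b n)) ≤ u (n + 1) := by
      intro n
      refine hmem_le (n + 1) _ ⟨l n, x n, y n, hlen n, hxA n, hyA n, ?_⟩
      rw [htl n, wApp_cons, wApp_cons]
    have hab_le : ∀ n, dist (a n) (b n) ≤ u n := fun n =>
      hmem_le n _ ⟨tl n, x n, y n, htlen n, hxA n, hyA n, rfl⟩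
    -- compactness
    have hcpt : IsCompact ((Set.univ : Set (Fin (n₀ + 1))) ×ˢ (A ×ˢ A)) :=
      isCompact_univ.prod (hAcp.prod hAcp)
    have hmem : ∀ n, (hd' n, a n, b n) ∈ (Set.univ : Set (Fin (n₀ + 1))) ×ˢ (A ×ˢ A) := by
      intro n; exact ⟨mem_univ _, haA n, hbA n⟩
    obtain ⟨⟨i, aL, bL⟩, hqmem, φ, hφ, hconv⟩ := hcpt.tendsto_subseq hmem
    have haLA : aL ∈ A := hqmem.2.1
    have hbLA : bL ∈ A := hqmem.2.2
    have hconvi : Filter.Tendsto (fun n => hd' (φ n)) Filter.atTop (nhds i) :=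
      (continuous_fst.tendsto _).comp hconv
    have hconva : Filter.Tendsto (fun n => a (φ n)) Filter.atTop (nhds aL) :=
      ((continuous_fst.comp continuous_snd).tendsto _).comp hconv
    have hconvb : Filter.Tendsto (fun n => b (φ n)) Filter.atTop (nhds bL) :=
      ((continuous_snd.comp continuous_snd).tendsto _).comp hconv
    have hevent : ∀ᶠ n in Filter.atTop, hd' (φ n) = i := by
      have : nhds i = pure i := by rw [nhds_discrete]
      rw [this, Filter.tendsto_pure] at hconvi
      exact hconvi
    -- limits
    have hφtop : Filter.Tendsto (fun n => φ n + 1) Filter.atTop Filter.atTop :=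
      (Filter.tendsto_add_atTop_nat 1).comp hφ.tendsto_atTop
    have hUφ : Filter.Tendsto (fun n => u (φ n + 1)) Filter.atTop (nhds L) :=
      htend.comp hφtop
    have hinv : Filter.Tendsto (fun n : ℕ => (1 : ℝ) / (φ n + 1)) Filter.atTop (nhds 0) :=
      tendsto_one_div_add_atTop_nhds_zero_nat.comp hφ.tendsto_atTop
    have hlow : Filter.Tendsto (fun n => u (φ n + 1) - 1 / (φ n + 1)) Filter.atTop (nhds L) := by
      simpa using hUφ.sub hinv
    have hdistL : Filter.Tendsto
        (fun n => dist (f (hd' (φ n)) (a (φ n))) (f (hd' (φ n)) (b (φ n))))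
        Filter.atTop (nhds L) := by
      refine tendsto_of_tendsto_of_tendsto_of_le_of_le hlow hUφ
        (fun n => le_of_lt (hvals (φ n))) (fun n => hvals' (φ n))
    -- continuity limit
    have hfa : Filter.Tendsto (fun n => f i (a (φ n))) Filter.atTop (nhds (f i aL)) := by
      rw [tendsto_iff_dist_tendsto_zero]
      refine squeeze_zero (fun n => dist_nonneg) (fun n =>
        hnexp i _ _ (hAsub (haA (φ n))) (hAsub haLA)) ?_
      exact (tendsto_iff_dist_tendsto_zero).1 hconva
    have hfb : Filter.Tendsto (fun n => f i (b (φ n))) Filter.atTop (nhds (f i bL)) := by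
      rw [tendsto_iff_dist_tendsto_zero]
      refine squeeze_zero (fun n => dist_nonneg) (fun n =>
        hnexp i _ _ (hAsub (hbA (φ n))) (hAsub hbLA)) ?_
      exact (tendsto_iff_dist_tendsto_zero).1 hconvb
    have hdist2 : Filter.Tendsto
        (fun n => dist (f (hd' (φ n)) (a (φ n))) (f (hd' (φ n)) (b (φ n))))
        Filter.atTop (nhds (dist (f i aL) (f i bL))) := by
      refine (hfa.dist hfb).congr' ?_
      filter_upwards [hevent] with n hn
      rw [hn]
    have hLeq : dist (f i aL) (f i bL) = L := tendsto_nhds_unique hdist2 hdistL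
    have habL : dist aL bL ≤ L := by
      refine le_of_tendsto_of_tendsto' (hconva.dist hconvb) (htend.comp hφ.tendsto_atTop)
        fun n => hab_le (φ n)
    have hLpos : 0 < L := lt_of_lt_of_le hδ hLδ
    have hne' : aL ≠ bL := by
      rintro rfl
      rw [dist_self] at hLeq
      exact hLpos.ne hLeq
    have := (hf i).2 aL (hAsub haLA) bL (hAsub hbLA) hne'
    rw [hLeq] at this
    exact absurd (this.trans_le habL) (lt_irrefl L)
  -- separation of F' from A
  set F' : Set (Fin d → ℝ) := F \ A with hF'
  have hF'fin : F'.Finite := hF.subset diff_subset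
  have hδex : ∃ δ : ℝ, 0 < δ ∧ ∀ p ∈ F', ∀ a ∈ A, δ ≤ dist p a := by
    by_cases hT : (hF'fin.toFinset : Finset (Fin d → ℝ)).Nonempty
    · refine ⟨(hF'fin.toFinset).inf' hT (fun p => infDist p A), ?_, ?_⟩
      · rw [Finset.lt_inf'_iff]
        intro p hp
        have hp' : p ∈ F' := hF'fin.mem_toFinset.mp hp
        exact (hAcp.isClosed.notMem_iff_infDist_pos ⟨z₀, hz₀⟩).mp hp'.2
      · intro p hp aa haa
        exact le_trans (Finset.inf'_le _ (hF'fin.mem_toFinset.mpr hp)) (infDist_le_dist_of_mem haa)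
    · refine ⟨1, one_pos, fun p hp => absurd ?_ hT⟩
      exact ⟨p, hF'fin.mem_toFinset.mpr hp⟩
  obtain ⟨δ, hδpos, hδsep⟩ := hδex
  obtain ⟨N, hN⟩ := hukey δ hδpos
  -- the set K
  set K : Set (Fin d → ℝ) := A ∪ F' with hK
  have hKAF : K = A ∪ F := by rw [hK, hF', Set.union_diff_self]
  -- words of length N
  set W := List.Vector (Fin (n₀ + 1)) N with hW
  -- the partial maps and their Lipschitz extensions
  have hψ : ∀ w : W, ∃ E : (Fin d → ℝ) → (Fin d → ℝ), LipschitzWith 1 E ∧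
      Set.EqOn (fun z => if z ∈ A then wApp w.1 z else wApp w.1 z₀) E K := by
    intro w
    set ψ : (Fin d → ℝ) → (Fin d → ℝ) := fun z => if z ∈ A then wApp w.1 z else wApp w.1 z₀ with hψdef
    have hlip : LipschitzOnWith 1 ψ K := by
      rw [lipschitzOnWith_iff_dist_le_mul]
      intro p hp q hq
      rw [NNReal.coe_one, one_mul]
      have key : ∀ z z' : (Fin d → ℝ), z ∈ A → z' ∈ F' → dist (ψ z) (ψ z') ≤ dist z z' := by
        intro z z' hz hz'
        have hz'A : z' ∉ A := hz'.2
        have h1 : dist (ψ z) (ψ z') = dist (wApp w.1 z) (wApp w.1 z₀) := by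
          rw [hψdef]; simp [hz, hz'A]
        have h2 : dist (wApp w.1 z) (wApp w.1 z₀) ≤ u N :=
          hmem_le N _ ⟨w.1, z, z₀, w.2, hz, hz₀, rfl⟩
        have h3 : δ ≤ dist z' z := hδsep z' hz' z hz
        rw [h1, dist_comm z z']
        exact h2.trans (hN.le.trans h3)
      rcases hp with hpA | hpF
      · rcases hq with hqA | hqF
        · have : ψ p = wApp w.1 p := by rw [hψdef]; simp [hpA]
          have h2 : ψ q = wApp w.1 q := by rw [hψdef]; simp [hqA]
          rw [this, h2]
          exact hwLip w.1 p q hpA hqA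
        · exact key p q hpA hqF
      · rcases hq with hqA | hqF
        · rw [dist_comm (ψ p) (ψ q), dist_comm p q]
          exact key q p hqA hpF
        · have h1 : ψ p = wApp w.1 z₀ := by rw [hψdef]; simp [hpF.2]
          have h2 : ψ q = wApp w.1 z₀ := by rw [hψdef]; simp [hqF.2]
          rw [h1, h2, dist_self]
          exact dist_nonneg
    obtain ⟨E, hE1, hE2⟩ := hlip.extend_pi
    exact ⟨E, hE1, hE2⟩
  choose E hElip hEeq using hψ
  -- the clamp map
  set cl : (Fin d → ℝ) → (Fin d → ℝ) := fun z i => max 0 (min (z i) 1) with hcl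
  -- the final system
  set G : (Fin (n₀ + 1) × W) ⊕ {p // p ∈ hF'fin.toFinset} → (Fin d → ℝ) → (Fin d → ℝ) :=
    Sum.elim (fun iw z => f iw.1 (cl (E iw.2 z))) (fun p _ => (p : (Fin d → ℝ))) with hG
  have hGweak : ∀ j, IsWeakContractionOn (G j) S := by
    rintro (⟨i, w⟩ | ⟨p, hp⟩)
    · constructor
      · intro z _
        exact hmapS i (clamp_mem _)
      · intro z hz z' hz' hzz'
        rcases eq_or_ne (cl (E (i, w).2 z)) (cl (E (i, w).2 z')) with heq | hne2
        · simp only [hG, Sum.elim_inl]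
          rw [heq, dist_self]
          exact dist_pos.mpr hzz'
        · simp only [hG, Sum.elim_inl]
          calc dist (f i (cl (E (i, w).2 z))) (f i (cl (E (i, w).2 z')))
              < dist (cl (E (i, w).2 z)) (cl (E (i, w).2 z')) :=
                (hf i).2 _ (clamp_mem _) _ (clamp_mem _) hne2
            _ ≤ dist (E (i, w).2 z) (E (i, w).2 z') := clamp_lip _ _
            _ ≤ dist z z' := by
                have := (hElip (i, w).2).dist_le_mul z z'
                simpa using this
    · constructor
      · intro z _
        have hpF : (p : (Fin d → ℝ)) ∈ F' := hF'fin.mem_toFinset.mp hp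
        exact hFsub hpF.1
      · intro z hz z' hz' hzz'
        simp only [hG, Sum.elim_inr]
        rw [dist_self]
        exact dist_pos.mpr hzz'
  -- covering lemma for words
  have hcoverList : ∀ n : ℕ, (⋃ l ∈ {l : List (Fin (n₀ + 1)) | l.length = n}, wApp l '' A) = A := by
    intro n
    induction n with
    | zero =>
      apply Subset.antisymm
      · refine iUnion₂_subset fun l hl => ?_
        have : l = [] := List.length_eq_zero_iff.mp hl
        subst this
        intro z hz
        obtain ⟨zz, hzz, rfl⟩ := hz
        exact hzz
      · intro z hz
        exact mem_biUnion (by simp : ([] : List (Fin (n₀ + 1))) ∈ _) ⟨z, hz, rfl⟩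
    | succ n ih =>
      apply Subset.antisymm
      · refine iUnion₂_subset fun l hl => ?_
        obtain ⟨j, t, rfl, ht⟩ := listcons l n hl
        · intro z hz
          obtain ⟨zz, hzz, rfl⟩ := hz
          rw [wApp_cons]
          have : wApp t zz ∈ A := hwA t hzz
          have : f j (wApp t zz) ∈ ⋃ i, f i '' A :=
            mem_iUnion.2 ⟨j, mem_image_of_mem _ this⟩
          rwa [← hAeq] at this
      · intro z hz
        rw [hAeq] at hz
        simp only [mem_iUnion, mem_image] at hz
        obtain ⟨j, zz, hzz, rfl⟩ := hz
        rw [← ih] at hzz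
        simp only [mem_iUnion, mem_image, mem_setOf_eq] at hzz
        obtain ⟨t, ht, zz', hzz', rfl⟩ := hzz
        refine mem_biUnion (show (j :: t) ∈ {l : List (Fin (n₀ + 1)) | l.length = n + 1} by
          simp [ht]) ?_
        exact ⟨zz', hzz', by rw [wApp_cons]⟩
  have hcover : (⋃ w : W, wApp w.1 '' A) = A := by
    apply Subset.antisymm
    · refine iUnion_subset fun w => ?_
      intro z hz
      rw [← hcoverList N]
      exact mem_biUnion
        (show (w.1 : List (Fin (n₀ + 1))) ∈ {l : List (Fin (n₀ + 1)) | l.length = N} from w.2) hz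
    · intro z hz
      rw [← hcoverList N] at hz
      simp only [mem_iUnion, mem_image, mem_setOf_eq] at hz
      obtain ⟨lw, hlw, zz, hzz, rfl⟩ := hz
      exact mem_iUnion.2 ⟨⟨lw, hlw⟩, ⟨zz, hzz, rfl⟩⟩
  -- image computation
  have himg : ∀ (i : Fin (n₀ + 1)) (w : W),
      (fun z => f i (cl (E w z))) '' K = f i '' (wApp w.1 '' A) := by
    intro i w
    have hval : ∀ z ∈ K, cl (E w z) = if z ∈ A then wApp w.1 z else wApp w.1 z₀ := by
      intro z hz
      have h1 : E w z = if z ∈ A then wApp w.1 z else wApp w.1 z₀ := (hEeq w hz).symm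
      rw [hcl, h1]
      by_cases hzA : z ∈ A
      · simp only [hzA, if_true]
        exact clamp_eq_self (hAsub (hwA w.1 hzA))
      · simp only [hzA, if_false]
        exact clamp_eq_self (hAsub (hwA w.1 hz₀))
    apply Subset.antisymm
    · rintro _ ⟨z, hz, rfl⟩
      show f i (cl (E w z)) ∈ f i '' (wApp w.1 '' A)
      rw [hval z hz]
      by_cases hzA : z ∈ A
      · simp only [hzA, if_true]
        exact mem_image_of_mem _ (mem_image_of_mem _ hzA)
      · simp only [hzA, if_false]
        exact mem_image_of_mem _ (mem_image_of_mem _ hz₀)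
    · rintro _ ⟨_, ⟨zz, hzz, rfl⟩, rfl⟩
      refine ⟨zz, Or.inl hzz, ?_⟩
      show f i (cl (E w zz)) = f i (wApp w.1 zz)
      rw [hval zz (Or.inl hzz)]
      simp [hzz]
  -- K is nonempty
  have hKne : K.Nonempty := ⟨z₀, Or.inl hz₀⟩
  -- the big union equality
  have hbig : (⋃ j, G j '' K) = K := by
    rw [Set.iUnion_sum]
    have h1 : (⋃ iw : Fin (n₀ + 1) × W, G (Sum.inl iw) '' K) = A := by
      have : ∀ iw : Fin (n₀ + 1) × W, G (Sum.inl iw) '' K =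
          f iw.1 '' (wApp iw.2.1 '' A) := by
        rintro ⟨i, w⟩
        exact himg i w
      calc (⋃ iw : Fin (n₀ + 1) × W, G (Sum.inl iw) '' K)
          = ⋃ iw : Fin (n₀ + 1) × W, f iw.1 '' (wApp iw.2.1 '' A) := by
            exact iUnion_congr this
        _ = ⋃ i : Fin (n₀ + 1), ⋃ w : W, f i '' (wApp w.1 '' A) := iUnion_prod' _
        _ = ⋃ i : Fin (n₀ + 1), f i '' (⋃ w : W, wApp w.1 '' A) := by
            refine iUnion_congr fun i => ?_
            rw [image_iUnion]
        _ = ⋃ i : Fin (n₀ + 1), f i '' A := by rw [hcover]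
        _ = A := hAeq.symm
    have h2 : (⋃ p : {p // p ∈ hF'fin.toFinset}, G (Sum.inr p) '' K) = F' := by
      have : ∀ p : {p // p ∈ hF'fin.toFinset}, G (Sum.inr p) '' K = {(p : (Fin d → ℝ))} := by
        intro p
        exact hKne.image_const _
      rw [iUnion_congr this]
      apply Subset.antisymm
      · refine iUnion_subset fun p => ?_
        simp only [singleton_subset_iff]
        exact hF'fin.mem_toFinset.mp p.2
      · intro p hp
        exact mem_iUnion.2 ⟨⟨p, hF'fin.mem_toFinset.mpr hp⟩, rfl⟩
    rw [h1, h2]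
  -- indexing by Fin
  have : Nonempty ((Fin (n₀ + 1) × W) ⊕ {p // p ∈ hF'fin.toFinset}) :=
    ⟨Sum.inl ⟨0, ⟨List.replicate N 0, List.length_replicate⟩⟩⟩
  have hcard : 0 < Fintype.card ((Fin (n₀ + 1) × W) ⊕ {p // p ∈ hF'fin.toFinset}) :=
    Fintype.card_pos
  obtain ⟨m, hm⟩ := Nat.exists_eq_succ_of_ne_zero hcard.ne'
  let e : ((Fin (n₀ + 1) × W) ⊕ {p // p ∈ hF'fin.toFinset}) ≃ Fin (m + 1) :=
    (Fintype.equivFin _).trans (finCongr hm)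
  refine ⟨⟨z₀, Or.inl hz₀⟩, hAcp.union hF.isCompact,
    union_subset hAsub hFsub, m, fun j => G (e.symm j), fun j => hGweak _, ?_⟩
  have hre : (⋃ j, G (e.symm j) '' K) = K := by
    rw [e.symm.surjective.iUnion_comp fun i => G i '' K]
    exact hbig
  rw [← hKAF]
  exact hre.symm
end

section
/- If A ⊆ [0,1]^d is a weak IFS attractor, r ∈ (0,1], and x ∈ ℝ^d are such that the similar copy x + r·A = {x + r·a : a ∈ A} is contained in [0,1]^d, then x + r·A is a weak IFS attractor on [0,1]^d. -/
open Metric Set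

/-- Coordinatewise clamping onto the unit cube. -/
def clampCube (d : ℕ) (y : Fin d → ℝ) : Fin d → ℝ := fun i => max 0 (min 1 (y i))

lemma clampCube_mem (d : ℕ) (y : Fin d → ℝ) : clampCube d y ∈ unitCube d := by
  intro i _
  refine ⟨le_max_left _ _, ?_⟩
  exact max_le zero_le_one (min_le_left _ _)

lemma clampCube_eq_self (d : ℕ) {y : Fin d → ℝ} (hy : y ∈ unitCube d) : clampCube d y = y := by
  funext i
  have h := hy i (mem_univ i)
  simp only [clampCube, min_eq_right h.2, max_eq_right h.1]

lemma dist_clampCube_le (d : ℕ) (y z : Fin d → ℝ) :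
    dist (clampCube d y) (clampCube d z) ≤ dist y z := by
  rw [dist_pi_le_iff dist_nonneg]
  intro i
  have h1 : dist (clampCube d y i) (clampCube d z i) ≤ dist (y i) (z i) := by
    rw [Real.dist_eq, Real.dist_eq]
    have h2 : |min 1 (y i) - min 1 (z i)| ≤ |y i - z i| := by
      have := abs_min_sub_min_le_max (1 : ℝ) (y i) 1 (z i)
      simpa using this
    calc |max 0 (min 1 (y i)) - max 0 (min 1 (z i))|
        = |max (min 1 (y i)) 0 - max (min 1 (z i)) 0| := by rw [max_comm, max_comm (0:ℝ)]
      _ ≤ |min 1 (y i) - min 1 (z i)| := abs_max_sub_max_le_abs _ _ _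
      _ ≤ |y i - z i| := h2
  exact h1.trans (dist_le_pi_dist y z i)

/-- If `A ⊆ [0,1]^d` is a weak IFS attractor, `r ∈ (0,1]` and `x ∈ ℝ^d` are such that the
similar copy `x + r • A = {x + r • a : a ∈ A}` is contained in `[0,1]^d`, then `x + r • A`
is a weak IFS attractor on `[0,1]^d`. -/
theorem weakAttractor_similar_copy (d : ℕ) (hd : 1 ≤ d) (A : Set (Fin d → ℝ))
    (r : ℝ) (x : Fin d → ℝ) (hA : IsWeakIFSAttractorOn A (unitCube d))
    (hr : r ∈ Set.Ioc (0 : ℝ) 1)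
    (hsub : (fun a => x + r • a) '' A ⊆ unitCube d) :
    IsWeakIFSAttractorOn ((fun a => x + r • a) '' A) (unitCube d) := by
  obtain ⟨hne, hcomp, hAS, n, f, hf, hAeq⟩ := hA
  obtain ⟨hr0, hr1⟩ := hr
  have hrne : r ≠ 0 := ne_of_gt hr0
  set σ : (Fin d → ℝ) → (Fin d → ℝ) := fun a => x + r • a with hσ
  have hσcont : Continuous σ := by
    exact continuous_const.add (continuous_const_smul r)
  have hdistσ : ∀ a b, dist (σ a) (σ b) = r * dist a b := by
    intro a b
    simp only [hσ, dist_add_left, dist_smul₀, Real.norm_eq_abs, abs_of_pos hr0]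
  set g : Fin (n + 1) → (Fin d → ℝ) → (Fin d → ℝ) :=
    fun i y => clampCube d (σ (f i (clampCube d (r⁻¹ • (y - x))))) with hg
  have hkey : ∀ i, ∀ a ∈ A, g i (σ a) = σ (f i a) := by
    intro i a ha
    have h1 : r⁻¹ • (σ a - x) = a := by
      simp [hσ, smul_smul, inv_mul_cancel₀ hrne]
    have hfa : f i a ∈ A := by
      rw [hAeq]
      exact mem_iUnion.2 ⟨i, a, ha, rfl⟩
    have h2 : σ (f i a) ∈ unitCube d := hsub ⟨f i a, hfa, rfl⟩
    rw [hg]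
    simp only [h1, clampCube_eq_self d (hAS ha), clampCube_eq_self d h2]
  refine ⟨hne.image _, hcomp.image hσcont, hsub, n, g, ?_, ?_⟩
  · intro i
    constructor
    · intro y _
      exact clampCube_mem d _
    · intro y hy z hz hyz
      set cy := clampCube d (r⁻¹ • (y - x)) with hcy
      set cz := clampCube d (r⁻¹ • (z - x)) with hcz
      by_cases hc : cy = cz
      · have : g i y = g i z := by rw [hg]; simp [← hcy, ← hcz, hc]
        rw [this, dist_self]
        exact dist_pos.2 hyz
      · calc dist (g i y) (g i z)
            ≤ dist (σ (f i cy)) (σ (f i cz)) := dist_clampCube_le d _ _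
          _ = r * dist (f i cy) (f i cz) := hdistσ _ _
          _ < r * dist cy cz :=
              mul_lt_mul_of_pos_left
                ((hf i).2 cy (clampCube_mem d _) cz (clampCube_mem d _) hc) hr0
          _ ≤ r * dist (r⁻¹ • (y - x)) (r⁻¹ • (z - x)) :=
              mul_le_mul_of_nonneg_left (dist_clampCube_le d _ _) hr0.le
          _ = dist y z := by
              rw [dist_smul₀, dist_sub_right, Real.norm_eq_abs,
                abs_of_pos (inv_pos.2 hr0), ← mul_assoc, mul_inv_cancel₀ hrne, one_mul]
  · have himg : ∀ i, g i '' (σ '' A) = σ '' (f i '' A) := by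
      intro i
      rw [← Set.image_comp, ← Set.image_comp]
      exact Set.image_congr fun a ha => hkey i a ha
    calc σ '' A = σ '' (⋃ i, f i '' A) := by rw [← hAeq]
      _ = ⋃ i, σ '' (f i '' A) := Set.image_iUnion
      _ = ⋃ i, g i '' (σ '' A) := by simp_rw [himg]
end

section
/- Let (x_n)_{n∈ℕ} be a strictly decreasing sequence in (0,1) converging to 0 such that the gaps are strictly decreasing, i.e. x_n − x_{n+1} > x_{n+1} − x_{n+2} for all n. Then there exists a weak contraction g : [0,1] → [0,1] such that g(0) = 0 and g(x_n) = x_{n+1} for all n ∈ ℕ. -/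
open Metric Set Filter Topology

namespace WCaux

noncomputable def wcF (x : ℕ → ℝ) (m : ℕ) (t : ℝ) : ℝ :=
  x (m+2) + (x (m+1) - x (m+2)) / (x m - x (m+1)) * (t - x (m+1))

open Classical in
noncomputable def wcG (x : ℕ → ℝ) (t : ℝ) : ℝ :=
  if h : ∃ n, 0 < t ∧ x n ≤ t ∧ t < x 0 then wcF x (Nat.find h - 1) t
  else if t ≤ 0 then 0 else x 1

lemma gp {x : ℕ → ℝ} (hanti : StrictAnti x) (n : ℕ) : 0 < x n - x (n+1) :=
  sub_pos.2 (hanti (Nat.lt_succ_self n))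

lemma wcF_right {x : ℕ → ℝ} (hanti : StrictAnti x) (m : ℕ) : wcF x m (x m) = x (m+1) := by
  have h := (gp hanti m).ne'
  rw [wcF, div_mul_cancel₀ _ h]; ring

lemma wcF_left (x : ℕ → ℝ) (m : ℕ) : wcF x m (x (m+1)) = x (m+2) := by
  simp [wcF]

section

variable {x : ℕ → ℝ} (hanti : StrictAnti x)
  (hgap : ∀ n, x n - x (n + 1) > x (n + 1) - x (n + 2))

include hanti hgap

lemma wcF_bounds (m : ℕ) {t : ℝ} (h1 : x (m+1) ≤ t) (h2 : t ≤ x m) :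
    x (m+2) ≤ wcF x m t ∧ wcF x m t ≤ x (m+1) ∧
    x (m+1) - x (m+2) ≤ t - wcF x m t ∧ t - wcF x m t ≤ x m - x (m+1) := by
  have hg := gp hanti m
  have hg' := gp hanti (m+1)
  have hgm := hgap m
  unfold wcF
  set σ := (x (m+1) - x (m+2)) / (x m - x (m+1)) with hσ
  have h0 : 0 < σ := div_pos hg' hg
  have hone : σ < 1 := (div_lt_one hg).2 hgm
  have hmul : σ * (x m - x (m+1)) = x (m+1) - x (m+2) := div_mul_cancel₀ _ hg.ne'
  have k1 := mul_nonneg h0.le (sub_nonneg.2 h1)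
  have k2 := mul_nonneg h0.le (sub_nonneg.2 h2)
  have k3 := mul_nonneg (sub_nonneg.2 hone.le) (sub_nonneg.2 h1)
  have k4 := mul_nonneg (sub_nonneg.2 hone.le) (sub_nonneg.2 h2)
  refine ⟨by nlinarith, by nlinarith, by nlinarith, by nlinarith⟩

lemma wcF_lower_strict (m : ℕ) {t : ℝ} (h1 : x (m+1) < t) :
    x (m+1) - x (m+2) < t - wcF x m t := by
  have hg := gp hanti m
  have hg' := gp hanti (m+1)
  have hgm := hgap m
  unfold wcF
  set σ := (x (m+1) - x (m+2)) / (x m - x (m+1)) with hσ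
  have h0 : 0 < σ := div_pos hg' hg
  have hone : σ < 1 := (div_lt_one hg).2 hgm
  nlinarith [mul_pos (sub_pos.2 hone) (sub_pos.2 h1)]

lemma wcF_upper_strict (m : ℕ) {t : ℝ} (h2 : t < x m) :
    t - wcF x m t < x m - x (m+1) := by
  have hg := gp hanti m
  have hg' := gp hanti (m+1)
  have hgm := hgap m
  unfold wcF
  set σ := (x (m+1) - x (m+2)) / (x m - x (m+1)) with hσ
  have h0 : 0 < σ := div_pos hg' hg
  have hone : σ < 1 := (div_lt_one hg).2 hgm
  have hmul : σ * (x m - x (m+1)) = x (m+1) - x (m+2) := div_mul_cancel₀ _ hg.ne'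
  nlinarith [mul_pos (sub_pos.2 hone) (sub_pos.2 h2)]

lemma wcF_piece_mono (m : ℕ) {p q : ℝ} (hpq : p < q) :
    wcF x m p ≤ wcF x m q ∧ p - wcF x m p < q - wcF x m q := by
  have hg := gp hanti m
  have hg' := gp hanti (m+1)
  have hgm := hgap m
  unfold wcF
  set σ := (x (m+1) - x (m+2)) / (x m - x (m+1)) with hσ
  have h0 : 0 < σ := div_pos hg' hg
  have hone : σ < 1 := (div_lt_one hg).2 hgm
  constructor
  · nlinarith [mul_nonneg h0.le (sub_nonneg.2 hpq.le)]
  · nlinarith [mul_pos (sub_pos.2 hone) (sub_pos.2 hpq)]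

end

lemma wcG_nonpos (x : ℕ → ℝ) {t : ℝ} (ht : t ≤ 0) : wcG x t = 0 := by
  rw [wcG, dif_neg, if_pos ht]
  rintro ⟨n, h0, -, -⟩; exact absurd h0 (not_lt.2 ht)

lemma wcG_top {x : ℕ → ℝ} (hpos : ∀ n, 0 < x n) {t : ℝ} (ht : x 0 ≤ t) : wcG x t = x 1 := by
  rw [wcG, dif_neg, if_neg (by linarith [hpos 0])]
  rintro ⟨n, -, -, hc⟩; exact absurd hc (not_lt.2 ht)

lemma wcG_eval {x : ℕ → ℝ} (hanti : StrictAnti x) (hpos : ∀ n, 0 < x n)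
    (m : ℕ) {t : ℝ} (h1 : x (m+1) ≤ t) (h2 : t ≤ x m) :
    wcG x t = wcF x m t := by
  classical
  have ht0 : 0 < t := lt_of_lt_of_le (hpos (m+1)) h1
  by_cases hlt : t < x 0
  · have hex : ∃ n, 0 < t ∧ x n ≤ t ∧ t < x 0 := ⟨m+1, ht0, h1, hlt⟩
    rw [wcG, dif_pos hex]
    have hkspec := (Nat.find_spec hex).2.1
    rcases lt_or_eq_of_le h2 with h2' | h2'
    · -- t < x m, so Nat.find hex = m+1
      have hk1 : Nat.find hex ≤ m+1 := Nat.find_le ⟨ht0, h1, hlt⟩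
      have hk2 : m+1 ≤ Nat.find hex := by
        by_contra hc
        push_neg at hc
        have hx : x m ≤ x (Nat.find hex) := hanti.antitone (Nat.lt_succ_iff.mp hc)
        linarith
      rw [le_antisymm hk1 hk2]
      simp only [Nat.add_sub_cancel]
    · -- t = x m; m ≥ 1 and Nat.find hex = m
      have hm0 : m ≠ 0 := by rintro rfl; rw [← h2'] at hlt; exact lt_irrefl t hlt
      obtain ⟨m', rfl⟩ : ∃ m', m = m' + 1 :=
        ⟨m - 1, (Nat.succ_pred_eq_of_pos (Nat.pos_of_ne_zero hm0)).symm⟩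
      have hk1 : Nat.find hex ≤ m'+1 := Nat.find_le ⟨ht0, h2'.ge, hlt⟩
      have hk2 : m'+1 ≤ Nat.find hex := by
        by_contra hc
        push_neg at hc
        have hx : x (Nat.find hex) > x (m'+1) := hanti hc
        rw [← h2'] at hx
        linarith
      rw [le_antisymm hk1 hk2]
      simp only [Nat.add_sub_cancel]
      rw [h2', wcF_left x m', wcF_right hanti (m'+1)]
  · -- x 0 ≤ t forces t = x m = x 0, m = 0
    push_neg at hlt
    have h3 : x m ≤ x 0 := hanti.antitone (Nat.zero_le m)
    have ht : t = x 0 := le_antisymm (h2.trans h3) hlt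
    have hxm : x m = x 0 := le_antisymm h3 (ht ▸ h2)
    have hm : m = 0 := hanti.injective hxm
    subst hm
    rw [wcG_top hpos hlt, ht, wcF_right hanti 0]

lemma piece_exists {x : ℕ → ℝ} (hanti : StrictAnti x) (hlim : Tendsto x atTop (𝓝 0))
    {t : ℝ} (ht0 : 0 < t) (ht1 : t ≤ x 0) : ∃ m, x (m+1) ≤ t ∧ t ≤ x m := by
  classical
  have hex : ∃ n, x n ≤ t := by
    obtain ⟨n, hn⟩ := (hlim.eventually (gt_mem_nhds ht0)).exists
    exact ⟨n, hn.le⟩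
  have hks : x (Nat.find hex) ≤ t := Nat.find_spec hex
  rcases Nat.eq_zero_or_pos (Nat.find hex) with hk0 | hkp
  · rw [hk0] at hks
    exact ⟨0, le_trans (hanti Nat.zero_lt_one).le hks, ht1⟩
  · refine ⟨Nat.find hex - 1, ?_, ?_⟩
    · have he : Nat.find hex - 1 + 1 = Nat.find hex := by omega
      rw [he]; exact hks
    · have := Nat.find_min hex (Nat.pred_lt hkp.ne')
      push_neg at this
      exact this.le

lemma wcG_mono {x : ℕ → ℝ} (hanti : StrictAnti x) (hpos : ∀ n, 0 < x n)
    (hlim : Tendsto x atTop (𝓝 0))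
    (hgap : ∀ n, x n - x (n + 1) > x (n + 1) - x (n + 2)) {p q : ℝ}
    (hp0 : 0 ≤ p) (hpq : p < q) :
    wcG x p ≤ wcG x q ∧ p - wcG x p < q - wcG x q := by
  have hganti : StrictAnti (fun n => x n - x (n+1)) :=
    strictAnti_nat_of_succ_lt (fun n => hgap n)
  have hgle : ∀ {k m : ℕ}, k ≤ m → x m - x (m+1) ≤ x k - x (k+1) :=
    fun h => hganti.antitone h
  rcases hp0.eq_or_lt with rfl | hp0'
  · -- p = 0
    rw [wcG_nonpos x le_rfl]
    by_cases hq : x 0 ≤ q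
    · rw [wcG_top hpos hq]
      have := hanti (Nat.zero_lt_one)
      exact ⟨(hpos 1).le, by linarith⟩
    · push_neg at hq
      obtain ⟨m, hm1, hm2⟩ := piece_exists hanti hlim hpq hq.le
      rw [wcG_eval hanti hpos m hm1 hm2]
      obtain ⟨b1, b2, b3, b4⟩ := wcF_bounds hanti hgap m hm1 hm2
      have := hpos (m+2)
      have := gp hanti (m+1)
      exact ⟨by linarith, by linarith⟩
  · -- 0 < p
    by_cases hp : x 0 ≤ p
    · rw [wcG_top hpos hp, wcG_top hpos (hp.trans hpq.le)]
      exact ⟨le_rfl, by linarith⟩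
    · push_neg at hp
      obtain ⟨m, hm1, hm2⟩ := piece_exists hanti hlim hp0' hp.le
      have hgp : wcG x p = wcF x m p := wcG_eval hanti hpos m hm1 hm2
      by_cases hq' : q ≤ x m
      · -- same piece
        have hgq : wcG x q = wcF x m q := wcG_eval hanti hpos m (hm1.trans hpq.le) hq'
        rw [hgp, hgq]
        exact wcF_piece_mono hanti hgap m hpq
      · push_neg at hq'
        obtain ⟨pb1, pb2, pb3, pb4⟩ := wcF_bounds hanti hgap m hm1 hm2
        -- p strictly inside or at right endpoint
        by_cases hq0 : x 0 ≤ q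
        · rw [wcG_top hpos hq0, hgp]
          have hx1 : x (m+1) ≤ x 1 := hanti.antitone (Nat.le_add_left 1 m)
          have hgm0 : x m - x (m+1) ≤ x 0 - x 1 := hgle (Nat.zero_le m)
          refine ⟨by linarith, ?_⟩
          rcases hm2.eq_or_lt with hpe | hps
          · -- p = x m  (then m ≥ 1 since p < x 0)
            have hm0 : 0 < m := Nat.pos_of_ne_zero (by
              rintro rfl; rw [hpe] at hp; exact lt_irrefl _ hp)
            have : x m - x (m+1) < x 0 - x 1 := hganti hm0
            linarith
          · have := wcF_upper_strict hanti hgap m hps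
            linarith
        · push_neg at hq0
          obtain ⟨k, hk1, hk2⟩ := piece_exists hanti hlim (hp0'.trans hpq) hq0.le
          have hgq : wcG x q = wcF x k q := wcG_eval hanti hpos k hk1 hk2
          obtain ⟨qb1, qb2, qb3, qb4⟩ := wcF_bounds hanti hgap k hk1 hk2
          have hkm : k < m := by
            have : x m < x k := lt_of_lt_of_le hq' hk2
            exact hanti.lt_iff_gt.mp this
          have hk1m : k + 1 ≤ m := hkm
          have hxle : x (m+1) ≤ x (k+2) := hanti.antitone (by omega)
          have hgle1 : x m - x (m+1) ≤ x (k+1) - x (k+2) := hgle hk1m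
          rw [hgp, hgq]
          refine ⟨by linarith, ?_⟩
          rcases hm2.eq_or_lt with hpe | hps
          · rcases hk1.eq_or_lt with hqe | hqs
            · -- p = x m, q = x (k+1): then k+1 < m
              have : x m < x (k+1) := by rw [← hpe, hqe]; exact hpq
              have hklt : k + 1 < m := hanti.lt_iff_gt.mp this
              have : x m - x (m+1) < x (k+1) - x (k+2) := hganti hklt
              linarith
            · have := wcF_lower_strict hanti hgap k hqs
              linarith
          · have := wcF_upper_strict hanti hgap m hps
            linarith
end WCaux

/-- Let `(x n)` be a strictly decreasing sequence in `(0,1)` converging to `0` whose gaps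
are strictly decreasing, i.e. `x n - x (n+1) > x (n+1) - x (n+2)` for all `n`. Then there
is a weak contraction `g : [0,1] → [0,1]` (a self-map of `[0,1]` strictly decreasing
distances of distinct points) with `g 0 = 0` and `g (x n) = x (n+1)` for all `n`. -/
theorem exists_weakContraction_shifting_sequence (x : ℕ → ℝ) (hanti : StrictAnti x)
    (hmem : ∀ n, x n ∈ Set.Ioo (0 : ℝ) 1) (hlim : Tendsto x atTop (𝓝 0))
    (hgap : ∀ n, x n - x (n + 1) > x (n + 1) - x (n + 2)) :
    ∃ g : ℝ → ℝ, Set.MapsTo g (Set.Icc 0 1) (Set.Icc 0 1) ∧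
      (∀ p ∈ Set.Icc (0 : ℝ) 1, ∀ q ∈ Set.Icc (0 : ℝ) 1, p ≠ q →
        dist (g p) (g q) < dist p q) ∧
      g 0 = 0 ∧ ∀ n, g (x n) = x (n + 1) := by
  have hpos : ∀ n, 0 < x n := fun n => (hmem n).1
  have key : ∀ {p q : ℝ}, 0 ≤ p → p < q →
      WCaux.wcG x p ≤ WCaux.wcG x q ∧ p - WCaux.wcG x p < q - WCaux.wcG x q :=
    fun hp0 hpq => WCaux.wcG_mono hanti hpos hlim hgap hp0 hpq
  have h0 : WCaux.wcG x 0 = 0 := WCaux.wcG_nonpos x le_rfl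
  refine ⟨WCaux.wcG x, ?_, ?_, h0, ?_⟩
  · -- MapsTo
    rintro t ⟨ht0, ht1⟩
    rcases ht0.eq_or_lt with rfl | ht0'
    · rw [h0]; exact ⟨le_rfl, zero_le_one⟩
    · obtain ⟨hmo, hh⟩ := key le_rfl ht0'
      rw [h0] at hmo hh
      exact ⟨hmo, by linarith⟩
  · -- weak contraction
    have main : ∀ p q : ℝ, 0 ≤ p → p < q → dist (WCaux.wcG x p) (WCaux.wcG x q) < dist p q := by
      intro p q hp0 hpq
      obtain ⟨hmo, hh⟩ := key hp0 hpq
      rw [Real.dist_eq, Real.dist_eq, abs_of_nonpos (by linarith), abs_of_nonpos (by linarith)]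
      linarith
    intro p hp q hq hne
    rcases hne.lt_or_gt with h | h
    · exact main p q hp.1 h
    · rw [dist_comm, dist_comm p q]
      exact main q p hq.1 h
  · -- interpolation
    intro n
    have h1 : x (n+1) ≤ x n := (hanti (Nat.lt_succ_self n)).le
    rw [WCaux.wcG_eval hanti hpos n h1 le_rfl, WCaux.wcF_right hanti n]
end
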